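/- arXiv:2206.00900 — 6 statements merged into one kernel-verified Lean document; each statement's English description precedes it below -/
import Mathlib

section
/- For any integer n ≥ 3 and prime power q, the ceiling of ((q^{n+1}-1)(q^n-1)) / ((q^{n+1}-q^3+q^2-1)(q-1)) equals (q^n-1)/(q-1) + q + 1. -/
theorem stmt_1 (q n : ℕ) (hq : 2 ≤ q) (hn : 3 ≤ n) :
    (⌈(((q : ℚ) ^ (n + 1) - 1) * ((q : ℚ) ^ n - 1)) /
        (((q : ℚ) ^ (n + 1) - (q : ℚ) ^ 3 + (q : ℚ) ^ 2 - 1) * ((q : ℚ) - 1))⌉ : ℚ) =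
      ((q : ℚ) ^ n - 1) / ((q : ℚ) - 1) + (q : ℚ) + 1 := by
  set Q : ℚ := (q : ℚ) with hQdef
  have hQ2 : (2 : ℚ) ≤ Q := by rw [hQdef]; exact_mod_cast hq
  have hQ1 : (1 : ℚ) < Q := by linarith
  have hden : (0 : ℚ) < Q - 1 := by linarith
  have hQpos : (0 : ℚ) < Q := by linarith
  have hx : Q ^ 3 ≤ Q ^ n := pow_le_pow_right₀ (by linarith) hn
  have hx4 : Q ^ 3 * Q ≤ Q ^ n * Q := by nlinarith
  have hD : (0 : ℚ) < Q ^ (n + 1) - Q ^ 3 + Q ^ 2 - 1 := by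
    rw [pow_succ]
    nlinarith [hx4, sq_nonneg (Q - 1)]
  have hDden : (0 : ℚ) < (Q ^ (n + 1) - Q ^ 3 + Q ^ 2 - 1) * (Q - 1) := mul_pos hD hden
  -- the integer value of the ceiling
  set z : ℤ := (∑ i ∈ Finset.range n, (q : ℤ) ^ i) + q + 1 with hzdef
  have zQ : (z : ℚ) = (Q ^ n - 1) / (Q - 1) + Q + 1 := by
    have hg : ∑ i ∈ Finset.range n, Q ^ i = (Q ^ n - 1) / (Q - 1) :=
      geom_sum_eq (by linarith) n
    push_cast [hzdef]
    rw [← hg]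
  have hz1 : (z : ℚ) * (Q - 1) = Q ^ n - 1 + (Q + 1) * (Q - 1) := by
    rw [zQ]
    field_simp
    ring
  have key : ⌈((Q ^ (n + 1) - 1) * (Q ^ n - 1)) /
      ((Q ^ (n + 1) - Q ^ 3 + Q ^ 2 - 1) * (Q - 1))⌉ = z := by
    rw [Int.ceil_eq_iff]
    constructor
    · rw [lt_div_iff₀ hDden, pow_succ]
      have e : ((z : ℚ) - 1) * ((Q ^ n * Q - Q ^ 3 + Q ^ 2 - 1) * (Q - 1)) =
          (Q ^ n + Q ^ 2 - Q - 1) * (Q ^ n * Q - Q ^ 3 + Q ^ 2 - 1) := by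
        linear_combination (Q ^ n * Q - Q ^ 3 + Q ^ 2 - 1) * hz1
      rw [e]
      nlinarith [hx, hx4, sq_nonneg (Q - 1), mul_pos hQpos hden,
        mul_pos (mul_pos hQpos hden) hden, mul_pos (mul_pos (mul_pos hQpos hden) hden) hden]
    · rw [div_le_iff₀ hDden, pow_succ]
      have e : (z : ℚ) * ((Q ^ n * Q - Q ^ 3 + Q ^ 2 - 1) * (Q - 1)) =
          (Q ^ n + Q ^ 2 - 2) * (Q ^ n * Q - Q ^ 3 + Q ^ 2 - 1) := by
        linear_combination (Q ^ n * Q - Q ^ 3 + Q ^ 2 - 1) * hz1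
      rw [e]
      nlinarith [hx, hx4, sq_nonneg (Q - 1), mul_pos hQpos hden]
  rw [key, zQ]
end

section
/- For any even integer n ≥ 4 and prime power q, the chromatic index of PG(n,q) is at least (q^n-1)/(q-1) + q + 1. -/
/-!
A colour class of a proper colouring of the lines of `PG(n, q)` is a partial line spread, i.e. a
set of pairwise trivially intersecting 2-dimensional subspaces of `V = F^(n+1)`. When `dim V` is
odd, the number `h` of nonzero vectors left uncovered by a partial spread is `≡ q - 1` modulo
`q² - 1`, say `h = (q² - 1) m + (q - 1)`, and every hyperplane contains a number of uncovered
vectors congruent to `h`, hence to `(m + 1)(q - 1)`, modulo `q(q - 1)`. If `m ≤ q - 2`, every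
hyperplane would thus contain at least `(m + 1)(q - 1)` of them, which is too many once the
incidences between uncovered vectors and hyperplanes are double counted. So `h ≥ q²(q - 1)`
(Beutelspacher's bound). Counting pairs of independent vectors bounds the number of lines from
below, and dividing by the maximal size of a colour class bounds the number of colours.
-/

open Module Finset
open scoped Classical

lemma Nat.le_of_modEq_of_lt {a b n : ℕ} (h : a ≡ b [MOD n]) (hb : b < n) : b ≤ a :=
  calc b = b % n := (Nat.mod_eq_of_lt hb).symm
    _ = a % n := h.symm
    _ ≤ a := Nat.mod_le a n

lemma Nat.pow_modEq_self {a k : ℕ} (ha : 0 < a) (hk : k ≠ 0) : a ^ k ≡ a [MOD a * (a - 1)] := by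
  obtain ⟨k, rfl⟩ := Nat.exists_eq_add_one_of_ne_zero hk
  have : a ^ k ≡ 1 ^ k [MOD a - 1] := (Nat.modEq_sub ha).pow k
  simpa [pow_succ'] using this.mul_left' a

lemma beutelspacher_arith {q Q m : ℤ} (hq : 2 ≤ q) (hQ : 1 ≤ Q) (hm : 0 ≤ m) (hmq : m + 1 < q) :
    ((q ^ 2 - 1) * m + (q - 1)) * (Q - 1) < (q * Q - 1) * ((m + 1) * (q - 1)) := by
  have key : (q * Q - 1) * ((m + 1) * (q - 1)) - ((q ^ 2 - 1) * m + (q - 1)) * (Q - 1) =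
      (q - 1) * (Q * (q - m - 1) + q * m) := by ring
  have : 0 < Q * (q - m - 1) + q * m := by nlinarith
  nlinarith

lemma chromatic_arith {q Q N c : ℤ} (hq : 2 ≤ q) (hQ : q ^ 2 ≤ Q)
    (hcover : N * (q ^ 2 - 1) + c * (q ^ 2 * (q - 1) + 1) ≤ c * (q * Q))
    (hlines : (q * Q - 1) * (q * Q - q) ≤ N * ((q ^ 2 - 1) * (q ^ 2 - q))) :
    Q - 1 + q * (q - 1) < c * (q - 1) := by
  by_contra! hc
  have hD : 0 ≤ q * Q - q ^ 3 + q ^ 2 - 1 := by nlinarith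
  have hq' : 0 ≤ q ^ 2 - q := by nlinarith
  have h1 : (q * Q - 1) * (q * Q - q) ≤ (q ^ 2 - q) * (c * (q * Q - q ^ 3 + q ^ 2 - 1)) := by
    nlinarith
  have h2 : (q - 1) * ((q ^ 2 - q) * (c * (q * Q - q ^ 3 + q ^ 2 - 1))) ≤
      (q ^ 2 - q) * ((Q - 1 + q * (q - 1)) * (q * Q - q ^ 3 + q ^ 2 - 1)) := by
    have := mul_le_mul_of_nonneg_right hc hD
    nlinarith
  have key : (q - 1) * ((q * Q - 1) * (q * Q - q)) -
      (q ^ 2 - q) * ((Q - 1 + q * (q - 1)) * (q * Q - q ^ 3 + q ^ 2 - 1)) =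
        q ^ 2 * (q - 1) ^ 4 * (q + 1) := by ring
  have : 0 < q ^ 2 * (q - 1) ^ 4 * (q + 1) := by
    have : 0 < q - 1 := by linarith
    positivity
  nlinarith

section PartialSpread

variable {F V : Type*} [Field F] [AddCommGroup V] [Module F V]

def IsPartialSpread (S : Finset (Submodule F V)) : Prop :=
  (∀ W ∈ S, finrank F W = 2) ∧ (S : Set (Submodule F V)).PairwiseDisjoint id

variable [Fintype V]

lemma isPartialSpread_colorClass {c : ℕ} {f : {W : Submodule F V // finrank F W = 2} → Fin c}
    (hf : ∀ W₁ W₂, W₁ ≠ W₂ → W₁.1 ⊓ W₂.1 ≠ ⊥ → f W₁ ≠ f W₂) (i : Fin c) :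
    IsPartialSpread (({W | f W = i} : Finset _).map (Function.Embedding.subtype _)) := by
  refine ⟨by simp +contextual, ?_⟩
  simp only [coe_map, Function.Embedding.coe_subtype, coe_filter, mem_univ, true_and]
  rintro _ ⟨W₁, h₁, rfl⟩ _ ⟨W₂, h₂, rfl⟩ hne
  by_contra hmeet
  exact hf W₁ W₂ (fun h => hne (congrArg _ h)) (fun h => hmeet (disjoint_iff.2 h))
    (h₁.trans h₂.symm)

noncomputable def holes (S : Finset (Submodule F V)) (U : Submodule F V) : Finset V :=
  {v | v ∈ U ∧ v ≠ 0 ∧ ∀ W ∈ S, v ∉ W}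

lemma Submodule.inf_ne_bot_of_finrank_lt_add {W U : Submodule F V}
    (h : finrank F V < finrank F W + finrank F U) : W ⊓ U ≠ ⊥ := by
  intro hbot
  have := Submodule.finrank_sup_add_finrank_inf_eq W U
  rw [hbot, finrank_bot] at this
  have := (W ⊔ U).finrank_le
  omega

lemma card_nonzero_mem_eq_sum_add_card_holes {S : Finset (Submodule F V)}
    (hS : (S : Set (Submodule F V)).PairwiseDisjoint id) (U : Submodule F V) :
    #{v | v ∈ U ∧ v ≠ 0} = ∑ W ∈ S, #{v | v ∈ W ⊓ U ∧ v ≠ 0} + #(holes S U) := by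
  have hsplit : ({v | v ∈ U ∧ v ≠ 0} : Finset V) =
      S.biUnion (fun W => {v | v ∈ W ⊓ U ∧ v ≠ 0}) ∪ holes S U := by
    ext v
    simp only [holes, mem_union, mem_biUnion, mem_filter, mem_univ, true_and, Submodule.mem_inf]
    by_cases h : ∃ W ∈ S, v ∈ W <;> aesop
  have hdisj : (S : Set (Submodule F V)).PairwiseDisjoint
      (fun W => ({v | v ∈ W ⊓ U ∧ v ≠ 0} : Finset V)) := by
    intro W₁ h₁ W₂ h₂ hne
    simp only [Function.onFun, disjoint_left, mem_filter, mem_univ, true_and]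
    rintro v ⟨hv₁, hv⟩ ⟨hv₂, -⟩
    exact hv ((Submodule.disjoint_def.1 (hS h₁ h₂ hne)) v hv₁.1 hv₂.1)
  rw [hsplit, card_union_of_disjoint, card_biUnion hdisj]
  simp only [holes, disjoint_left, mem_biUnion, mem_filter, mem_univ, true_and,
    Submodule.mem_inf]
  rintro v ⟨W, hW, ⟨hvW, -⟩, -⟩ ⟨-, -, hno⟩
  exact hno W hW hvW

variable [Fintype F]

local notation "q" => Fintype.card F

lemma card_linearIndependent_pair (E : Type*) [AddCommGroup E] [Module F E] [Finite E]
    (hE : 2 ≤ finrank F E) :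
    Nat.card {s : Fin 2 → E // LinearIndependent F s} =
      (q ^ finrank F E - 1) * (q ^ finrank F E - q) := by
  rw [card_linearIndependent hE, Fin.prod_univ_two, Fin.val_zero, Fin.val_one, pow_zero, pow_one]

lemma card_lines_lower_bound (hV : 2 ≤ finrank F V) :
    (q ^ finrank F V - 1) * (q ^ finrank F V - q) ≤
      Fintype.card {W : Submodule F V // finrank F W = 2} * ((q ^ 2 - 1) * (q ^ 2 - q)) := by
  let span₂ (s : {s : Fin 2 → V // LinearIndependent F s}) :
      {W : Submodule F V // finrank F W = 2} :=
    ⟨Submodule.span F (Set.range s.1), by rw [finrank_span_eq_card s.2, Fintype.card_fin]⟩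
  have hfiber (W : {W : Submodule F V // finrank F W = 2}) :
      #{s | span₂ s = W} ≤ (q ^ 2 - 1) * (q ^ 2 - q) := by
    calc #{s | span₂ s = W} = Nat.card {s // span₂ s = W} := by
          rw [Nat.card_eq_fintype_card, Fintype.card_subtype]
      _ ≤ Nat.card {t : Fin 2 → W.1 // LinearIndependent F t} :=
          Nat.card_le_card_of_injective
            (fun s => ⟨fun i => ⟨s.1.1 i,
                (congrArg Subtype.val s.2).le (Submodule.subset_span ⟨i, rfl⟩)⟩,
              LinearIndependent.of_comp W.1.subtype s.1.2⟩)
            fun s t hst => by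
              ext i
              exact congrArg (fun u : {t : Fin 2 → W.1 // LinearIndependent F t} => (u.1 i : V))
                hst
      _ = (q ^ 2 - 1) * (q ^ 2 - q) := by rw [card_linearIndependent_pair W.1 W.2.ge, W.2]
  calc (q ^ finrank F V - 1) * (q ^ finrank F V - q)
      = #(univ : Finset {s : Fin 2 → V // LinearIndependent F s}) := by
        rw [card_univ, ← card_linearIndependent_pair V hV, Nat.card_eq_fintype_card]
    _ ≤ (q ^ 2 - 1) * (q ^ 2 - q) * #(univ.image span₂) :=
        card_le_mul_card_image _ _ fun W _ => hfiber W
    _ ≤ _ := by rw [mul_comm]; exact Nat.mul_le_mul_right _ (card_le_univ _)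

lemma card_mem_submodule (U : Submodule F V) : #{v | v ∈ U} = q ^ finrank F U := by
  rw [← Fintype.card_subtype, ← card_eq_pow_finrank]

lemma card_nonzero_mem_add_one (U : Submodule F V) :
    #{v | v ∈ U ∧ v ≠ 0} + 1 = q ^ finrank F U := by
  have : ({v | v ∈ U ∧ v ≠ 0} : Finset V) = ({v | v ∈ U} : Finset V).erase 0 := by
    ext v; simp [and_comm]
  rw [this, card_erase_add_one (by simp), card_mem_submodule]

lemma card_nonzero_mem_modEq {U : Submodule F V} (hU : U ≠ ⊥) :
    #{v | v ∈ U ∧ v ≠ 0} ≡ q - 1 [MOD q * (q - 1)] := by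
  refine Nat.ModEq.add_right_cancel' 1 ?_
  rw [card_nonzero_mem_add_one, Nat.sub_add_cancel Fintype.card_pos]
  exact Nat.pow_modEq_self Fintype.card_pos (by rwa [Ne, Submodule.finrank_eq_zero])

lemma card_holes_add_modEq {S : Finset (Submodule F V)}
    (hS : (S : Set (Submodule F V)).PairwiseDisjoint id) {U : Submodule F V} (hU : U ≠ ⊥)
    (hmeet : ∀ W ∈ S, W ⊓ U ≠ ⊥) :
    #(holes S U) + #S * (q - 1) ≡ q - 1 [MOD q * (q - 1)] := by
  have hsum : ∑ W ∈ S, #{v | v ∈ W ⊓ U ∧ v ≠ 0} ≡ #S * (q - 1) [MOD q * (q - 1)] := by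
    simpa using Nat.ModEq.sum fun W hW => card_nonzero_mem_modEq (hmeet W hW)
  have hcard := card_nonzero_mem_modEq hU
  rw [card_nonzero_mem_eq_sum_add_card_holes hS] at hcard
  calc #(holes S U) + #S * (q - 1)
      ≡ ∑ W ∈ S, #{v | v ∈ W ⊓ U ∧ v ≠ 0} + #(holes S U) [MOD q * (q - 1)] := by
        rw [add_comm]; exact hsum.symm.add_right _
    _ ≡ q - 1 [MOD q * (q - 1)] := hcard

lemma IsPartialSpread.card_holes_modEq_of_finrank_add_one {S : Finset (Submodule F V)}
    (hS : IsPartialSpread S) (hV : 1 < finrank F V) {U : Submodule F V}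
    (hU : finrank F U + 1 = finrank F V) :
    #(holes S U) ≡ #(holes S ⊤) [MOD q * (q - 1)] := by
  have hmeet (U : Submodule F V) (hU : finrank F V < 2 + finrank F U) : ∀ W ∈ S, W ⊓ U ≠ ⊥ :=
    fun W hW => Submodule.inf_ne_bot_of_finrank_lt_add (by rwa [hS.1 W hW])
  have hU' := card_holes_add_modEq hS.2 (by rw [Ne, ← Submodule.finrank_eq_zero]; omega)
    (hmeet U (by omega))
  have htop := card_holes_add_modEq hS.2
    (by rw [Ne, ← Submodule.finrank_eq_zero, finrank_top]; omega)
    (hmeet ⊤ (by rw [finrank_top]; omega))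
  exact Nat.ModEq.add_right_cancel' _ (hU'.trans htop.symm)

lemma IsPartialSpread.card_mul_add_card_holes_add_one {S : Finset (Submodule F V)}
    (hS : IsPartialSpread S) : #S * (q ^ 2 - 1) + #(holes S ⊤) + 1 = q ^ finrank F V := by
  have hlines : ∀ W ∈ S, #{v | v ∈ W ⊓ ⊤ ∧ v ≠ 0} = q ^ 2 - 1 := fun W hW => by
    have := card_nonzero_mem_add_one W
    rw [hS.1 W hW] at this
    simp only [inf_top_eq]
    omega
  rw [← finrank_top F V, ← card_nonzero_mem_add_one, card_nonzero_mem_eq_sum_add_card_holes hS.2,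
    sum_congr rfl hlines, sum_const, smul_eq_mul]

lemma IsPartialSpread.exists_card_holes_eq {S : Finset (Submodule F V)} (hS : IsPartialSpread S)
    (hodd : Odd (finrank F V)) : ∃ m, #(holes S ⊤) = (q ^ 2 - 1) * m + (q - 1) := by
  have hq : 2 ≤ q := Fintype.one_lt_card
  obtain ⟨k, hk⟩ := hodd
  have hcount := hS.card_mul_add_card_holes_add_one
  rw [hk, pow_succ q (2 * k), pow_mul q 2 k] at hcount
  have hmod : #(holes S ⊤) + 1 ≡ q - 1 + 1 [MOD q ^ 2 - 1] :=
    calc #(holes S ⊤) + 1 ≡ #(holes S ⊤) + 1 + #S * (q ^ 2 - 1) [MOD q ^ 2 - 1] :=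
          (Nat.add_mul_mod_self_right _ _ _).symm
      _ = (q ^ 2) ^ k * q := by rw [← hcount]; ring
      _ ≡ 1 ^ k * q [MOD q ^ 2 - 1] :=
          ((Nat.modEq_sub (Nat.one_le_pow _ _ (by omega))).pow k).mul_right q
      _ = q - 1 + 1 := by rw [one_pow, one_mul, Nat.sub_add_cancel (by omega)]
  have hrem := Nat.ModEq.add_right_cancel' 1 hmod
  rw [Nat.ModEq, Nat.mod_eq_of_lt (a := q - 1) (Nat.sub_lt_sub_right (by omega) (by nlinarith))]
    at hrem
  exact ⟨_, (Nat.div_add_mod _ _).symm.trans (by rw [hrem])⟩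

lemma card_nonzero_dual_apply_eq_zero [Fintype (Dual F V)] {v : V} (hv : v ≠ 0) :
    #{φ : Dual F V | φ ≠ 0 ∧ φ v = 0} = q ^ (finrank F V - 1) - 1 := by
  have heval : Dual.eval F V v ≠ 0 := fun h =>
    hv ((Module.forall_dual_apply_eq_zero_iff F v).1 fun φ => LinearMap.congr_fun h φ)
  have hker := Dual.finrank_ker_add_one_of_ne_zero heval
  rw [Subspace.dual_finrank_eq] at hker
  have hcard : #{φ : Dual F V | φ ≠ 0 ∧ φ v = 0} + 1 =
      q ^ finrank F (LinearMap.ker (Dual.eval F V v)) := by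
    convert card_nonzero_mem_add_one (LinearMap.ker (Dual.eval F V v)) using 3
    ext φ; simp [and_comm]
  rw [← hker, Nat.add_sub_cancel, ← hcard, Nat.add_sub_cancel]

lemma sum_card_holes_ker [Fintype (Dual F V)] (S : Finset (Submodule F V)) :
    ∑ φ ∈ {φ : Dual F V | φ ≠ 0}, #(holes S (LinearMap.ker φ)) =
      #(holes S ⊤) * (q ^ (finrank F V - 1) - 1) := by
  have hker (φ : Dual F V) :
      holes S (LinearMap.ker φ) = bipartiteAbove (fun φ v => φ v = 0) (holes S ⊤) φ := by
    ext v; simp [holes, bipartiteAbove, and_comm]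
  simp_rw [hker]
  rw [sum_card_bipartiteAbove_eq_sum_card_bipartiteBelow, ← smul_eq_mul, ← sum_const]
  refine sum_congr rfl fun v hv => ?_
  rw [← card_nonzero_dual_apply_eq_zero (mem_filter.1 hv).2.2.1, bipartiteBelow, filter_filter]

lemma mul_le_card_holes_mul_of_forall_le_card_holes_ker (S : Finset (Submodule F V)) {r : ℕ}
    (h : ∀ φ : Dual F V, φ ≠ 0 → r ≤ #(holes S (LinearMap.ker φ))) :
    (q ^ finrank F V - 1) * r ≤ #(holes S ⊤) * (q ^ (finrank F V - 1) - 1) := by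
  have : Finite (Dual F V) := Module.finite_of_finite F
  let _ : Fintype (Dual F V) := Fintype.ofFinite _
  have hcard : #{φ : Dual F V | φ ≠ 0} + 1 = q ^ finrank F V := by
    rw [← Subspace.dual_finrank_eq, ← finrank_top F]
    convert card_nonzero_mem_add_one (⊤ : Submodule F (Dual F V)) using 3
    simp
  rw [← sum_card_holes_ker, ← Nat.eq_sub_of_add_eq hcard, ← smul_eq_mul]
  exact card_nsmul_le_sum _ _ _ fun φ hφ => h φ (mem_filter.1 hφ).2

theorem IsPartialSpread.le_card_holes {S : Finset (Submodule F V)} (hS : IsPartialSpread S)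
    (hodd : Odd (finrank F V)) (hV : 1 < finrank F V) :
    q ^ 2 * (q - 1) ≤ #(holes S ⊤) := by
  have hq : 2 ≤ q := Fintype.one_lt_card
  obtain ⟨m, hm⟩ := hS.exists_card_holes_eq hodd
  by_contra hlt
  have hmq : m + 1 < q := by
    by_contra hge
    have : (q ^ 2 - 1) * (q - 1) ≤ (q ^ 2 - 1) * m := Nat.mul_le_mul_left _ (by omega)
    have : (q ^ 2 - 1) * (q - 1) + (q - 1) = q ^ 2 * (q - 1) := by
      zify [show 1 ≤ q by omega, show 1 ≤ q ^ 2 by nlinarith]; ring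
    omega
  -- `q² - 1 ≡ q - 1` modulo `q(q - 1)`
  have hmodq : #(holes S ⊤) ≡ (m + 1) * (q - 1) [MOD q * (q - 1)] := by
    have : #(holes S ⊤) = (m + 1) * (q - 1) + q * (q - 1) * m := by
      rw [hm]; zify [show 1 ≤ q by omega, show 1 ≤ q ^ 2 by nlinarith]; ring
    rw [this]
    exact Nat.add_mul_mod_self_left _ _ _
  have hcount := mul_le_card_holes_mul_of_forall_le_card_holes_ker S fun φ hφ =>
    Nat.le_of_modEq_of_lt
      ((hS.card_holes_modEq_of_finrank_add_one hV (Dual.finrank_ker_add_one_of_ne_zero hφ)).trans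
        hmodq)
      (Nat.mul_lt_mul_of_pos_right hmq (by omega))
  obtain ⟨d, hd⟩ : ∃ d, finrank F V = d + 1 := ⟨_, (Nat.sub_add_cancel hV.le).symm⟩
  rw [hd, Nat.add_sub_cancel, hm, pow_succ' q d] at hcount
  have hQ : 1 ≤ q ^ d := Nat.one_le_pow _ _ (by omega)
  zify [hQ, show 1 ≤ q by omega, show 1 ≤ q ^ 2 by nlinarith, show 1 ≤ q * q ^ d by nlinarith]
    at hcount
  have := @beutelspacher_arith q (q ^ d) m (by exact_mod_cast hq)
    (by exact_mod_cast hQ) (by positivity) (by exact_mod_cast hmq)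
  linarith

theorem IsPartialSpread.card_mul_add_le {S : Finset (Submodule F V)} (hS : IsPartialSpread S)
    (hodd : Odd (finrank F V)) (hV : 1 < finrank F V) :
    #S * (q ^ 2 - 1) + q ^ 2 * (q - 1) + 1 ≤ q ^ finrank F V := by
  have := hS.card_mul_add_card_holes_add_one
  have := hS.le_card_holes hodd hV
  omega

lemma card_lines_mul_add_le_of_coloring (hodd : Odd (finrank F V)) (hV : 1 < finrank F V)
    {c : ℕ} (f : {W : Submodule F V // finrank F W = 2} → Fin c)
    (hf : ∀ W₁ W₂, W₁ ≠ W₂ → W₁.1 ⊓ W₂.1 ≠ ⊥ → f W₁ ≠ f W₂) :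
    Fintype.card {W : Submodule F V // finrank F W = 2} * (q ^ 2 - 1) +
      c * (q ^ 2 * (q - 1) + 1) ≤ c * q ^ finrank F V := by
  have hclass (i : Fin c) := (isPartialSpread_colorClass hf i).card_mul_add_le hodd hV
  simp only [card_map] at hclass
  calc Fintype.card {W : Submodule F V // finrank F W = 2} * (q ^ 2 - 1) +
        c * (q ^ 2 * (q - 1) + 1)
      = ∑ i, (#{W | f W = i} * (q ^ 2 - 1) + (q ^ 2 * (q - 1) + 1)) := by
        rw [← card_univ, card_eq_sum_card_fiberwise (f := f) (t := univ) (by simp),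
          sum_add_distrib, sum_mul, sum_const, card_univ, Fintype.card_fin, smul_eq_mul]
    _ ≤ ∑ _i : Fin c, q ^ finrank F V := sum_le_sum fun i _ => by have := hclass i; omega
    _ = c * q ^ finrank F V := by simp

theorem lt_mul_of_lineColoring (hodd : Odd (finrank F V)) (hV : 1 < finrank F V)
    {c : ℕ} (f : {W : Submodule F V // finrank F W = 2} → Fin c)
    (hf : ∀ W₁ W₂, W₁ ≠ W₂ → W₁.1 ⊓ W₂.1 ≠ ⊥ → f W₁ ≠ f W₂) :
    q ^ (finrank F V - 1) - 1 + q * (q - 1) < c * (q - 1) := by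
  have hq : 2 ≤ q := Fintype.one_lt_card
  have hcover := card_lines_mul_add_le_of_coloring hodd hV f hf
  have hlines := card_lines_lower_bound (F := F) (V := V) (by omega)
  obtain ⟨n, hn⟩ : ∃ n, finrank F V = n + 1 := ⟨_, (Nat.sub_add_cancel hV.le).symm⟩
  have h2n : 2 ≤ n := by obtain ⟨k, hk⟩ := hodd; omega
  rw [hn, pow_succ' q n] at hcover hlines
  rw [hn, Nat.add_sub_cancel]
  have hQ : q ^ 2 ≤ q ^ n := Nat.pow_le_pow_right (by omega) h2n
  zify [show 1 ≤ q by omega, show 1 ≤ q ^ 2 by nlinarith, show q ≤ q ^ 2 by nlinarith,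
    show 1 ≤ q * q ^ n by nlinarith, show q ≤ q * q ^ n by nlinarith,
    show 1 ≤ q ^ n from Nat.one_le_pow _ _ (by omega)] at hcover hlines ⊢
  exact chromatic_arith (by exact_mod_cast hq) (by exact_mod_cast hQ) hcover hlines

end PartialSpread

theorem stmt_6 (q n : ℕ) (hn : 4 ≤ n) (heven : Even n) (F : Type) [Field F] [Fintype F]
    (hq : Fintype.card F = q) :
    (q ^ n - 1) / (q - 1) + q + 1 ≤
      sInf {c : ℕ | ∃ f : {W : Submodule F (Fin (n + 1) → F) // Module.finrank F W = 2} → Fin c,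
        ∀ W₁ W₂, W₁ ≠ W₂ → W₁.1 ⊓ W₂.1 ≠ ⊥ → f W₁ ≠ f W₂} := by
  subst hq
  have hdim : finrank F (Fin (n + 1) → F) = n + 1 := Module.finrank_fin_fun F
  refine le_csInf
    ⟨_, Fintype.equivFin _, fun W₁ W₂ hne _ => (Fintype.equivFin _).injective.ne hne⟩ ?_
  rintro c ⟨f, hf⟩
  have hcol := lt_mul_of_lineColoring (by rw [hdim]; exact heven.add_one) (by omega) f hf
  rw [hdim, Nat.add_sub_cancel] at hcol
  by_contra! hc
  have hmul := Nat.mul_le_mul_right (Fintype.card F - 1) (Nat.lt_succ_iff.1 hc)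
  rw [add_mul] at hmul
  have := Nat.div_mul_le_self (Fintype.card F ^ n - 1) (Fintype.card F - 1)
  omega
end

section
/- The transversal design TD(q+1, q^{n-1}) obtained by deleting a codimension-2 subspace (and all lines meeting it) from PG(n,q) is resolvable; equivalently, its chromatic index equals q^{n-1}. -/
open Module Submodule LinearMap

/-!
A line of `V` meeting the codimension-2 subspace `U` trivially is a complement `W` of `U`, and is
determined by the projection `P_W : V → U` along it. Fix `b₀, b₁` spanning `V` modulo `U` and an
endomorphism `g` of `U` without eigenvectors (multiplication by an element of `𝔽_{q^(n-1)} ≅ U` not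
in `𝔽_q`), and colour `W` by `P_W b₀ + g (P_W b₁) ∈ U`. If distinct lines `W₁, W₂` meet in `v ≠ 0`
and get the same colour, then `D = P_{W₁} - P_{W₂}` kills `U` and `v` while `D b₀ = -g (D b₁)`;
writing `v ≡ s b₀ + t b₁ mod U` gives `s • g (D b₁) = t • D b₁`, so `D b₁ = 0`, hence `D = 0` and
`W₁ = W₂`. So `q^(n-1)` colours suffice, and they are needed because the `q^(n-1)` lines through a
fixed point outside `U` pairwise meet.
-/

theorem sInf_properColoring_eq_natCard {α β : Type*} [Finite β] (r : α → α → Prop)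
    (f : α → β) (hf : ∀ a b, a ≠ b → r a b → f a ≠ f b)
    (s : β → α) (hs : ∀ x y, x ≠ y → s x ≠ s y ∧ r (s x) (s y)) :
    sInf {c : ℕ | ∃ f : α → Fin c, ∀ a b, a ≠ b → r a b → f a ≠ f b} = Nat.card β := by
  have hcol : Nat.card β ∈ {c : ℕ | ∃ f : α → Fin c, ∀ a b, a ≠ b → r a b → f a ≠ f b} :=
    ⟨Finite.equivFin β ∘ f, fun a b hab hr h => hf a b hab hr ((Finite.equivFin β).injective h)⟩
  refine le_antisymm (Nat.sInf_le hcol) (le_csInf ⟨_, hcol⟩ ?_)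
  rintro c ⟨f', hf'⟩
  have hinj : Function.Injective (f' ∘ s) := fun x y h => by
    by_contra hxy
    exact hf' _ _ (hs x y hxy).1 (hs x y hxy).2 h
  simpa using Nat.card_le_card_of_injective _ hinj

theorem mul_ne_smul_of_notMem_range {F K : Type*} [Field F] [Field K] [Algebra F K] {x : K}
    (hx : x ∉ Set.range (algebraMap F K)) {u : K} (hu : u ≠ 0) (c : F) : x * u ≠ c • u := by
  rw [Algebra.smul_def]
  exact fun h => hx ⟨c, (mul_right_cancel₀ hu h).symm⟩

theorem exists_end_forall_ne_smul (F : Type*) [Field F] [Finite F] {U : Type*} [AddCommGroup U]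
    [Module F U] [FiniteDimensional F U] (hU : 2 ≤ finrank F U) :
    ∃ g : Module.End F U, ∀ u, u ≠ 0 → ∀ c : F, g u ≠ c • u := by
  have : Fact (ringChar F).Prime := ⟨CharP.char_is_prime F _⟩
  have : NeZero (finrank F U) := ⟨by omega⟩
  let K := FiniteField.Extension F (ringChar F) (finrank F U)
  have hK : finrank F K = finrank F U := FiniteField.finrank_extension _ _ _
  obtain ⟨x, hx⟩ : ∃ x : K, x ∉ (⊥ : Subalgebra F K) := by
    by_contra! h
    have := Subalgebra.bot_eq_top_iff_finrank_eq_one.mp (eq_top_iff.mpr fun x _ => h x)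
    omega
  obtain ⟨eU⟩ := FiniteDimensional.nonempty_linearEquiv_of_finrank_eq hK.symm
  refine ⟨eU.symm.conj (LinearMap.mulLeft F x), fun u hu c h => ?_⟩
  rw [LinearEquiv.conj_apply_apply, LinearEquiv.symm_symm, LinearMap.mulLeft_apply,
    LinearEquiv.symm_apply_eq, map_smul] at h
  exact mul_ne_smul_of_notMem_range (Algebra.mem_bot.not.mp hx) (eU.map_ne_zero_iff.mpr hu) c h

theorem LinearMap.eq_zero_of_ker_ne_bot_of_apply_zero_add_eq_zero {F Q U : Type*} [Field F]
    [AddCommGroup Q] [Module F Q] [AddCommGroup U] [Module F U] (e : Basis (Fin 2) F Q)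
    {g : Module.End F U} (hg : ∀ u, u ≠ 0 → ∀ c : F, g u ≠ c • u) {D : Q →ₗ[F] U}
    (hD : D (e 0) + g (D (e 1)) = 0) (hker : ker D ≠ ⊥) : D = 0 := by
  obtain ⟨x, hxD, hx⟩ := Submodule.exists_mem_ne_zero_of_ne_bot hker
  have hxe : e.repr x 0 • e 0 + e.repr x 1 • e 1 = x := by
    rw [← Fin.sum_univ_two (fun i => e.repr x i • e i)]
    exact e.sum_repr x
  set s := e.repr x 0
  set t := e.repr x 1
  have hD0 : D (e 0) = -g (D (e 1)) := eq_neg_of_add_eq_zero_left hD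
  have hst : s • g (D (e 1)) = t • D (e 1) := by
    rw [mem_ker, ← hxe, map_add, map_smul, map_smul, hD0, smul_neg] at hxD
    exact neg_add_eq_zero.mp hxD
  by_cases hc : D (e 1) = 0
  · refine e.ext fun i => ?_
    fin_cases i <;> simp [hD0, hc]
  by_cases hs : s = 0
  · rw [hs, zero_smul, eq_comm, smul_eq_zero] at hst
    refine absurd ?_ hx
    rw [← hxe, hs, hst.resolve_right hc, zero_smul, zero_smul, add_zero]
  refine absurd ?_ (hg _ hc (s⁻¹ * t))
  rw [mul_smul, ← hst, inv_smul_smul₀ hs]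

section Complements

variable {F V : Type*} [Field F] [AddCommGroup V] [Module F V] {U : Submodule F V}

theorem isCompl_of_inf_eq_bot_of_finrank_eq [FiniteDimensional F V] {W : Submodule F V}
    (hW : finrank F W = finrank F (V ⧸ U)) (hWU : W ⊓ U = ⊥) : IsCompl U W := by
  rw [isCompl_iff_disjoint _ _ (by rw [hW, ← U.finrank_quotient_add_finrank]; omega)]
  exact disjoint_iff.mpr (by rwa [inf_comm])

noncomputable def complColor (g : Module.End F U) (b : Fin 2 → V) {W : Submodule F V}
    (h : IsCompl U W) : U :=
  U.projectionOnto W h (b 0) + g (U.projectionOnto W h (b 1))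

theorem complColor_ne (e : Basis (Fin 2) F (V ⧸ U)) {g : Module.End F U}
    (hg : ∀ u, u ≠ 0 → ∀ c : F, g u ≠ c • u) {b : Fin 2 → V} (hb : ∀ i, U.mkQ (b i) = e i)
    {W₁ W₂ : Submodule F V} (h₁ : IsCompl U W₁) (h₂ : IsCompl U W₂) (hne : W₁ ≠ W₂)
    (hmeet : W₁ ⊓ W₂ ≠ ⊥) : complColor g b h₁ ≠ complColor g b h₂ := by
  intro hcol
  apply hne
  set D := U.projectionOnto W₁ h₁ - U.projectionOnto W₂ h₂
  have hUD : U ≤ ker D := fun u hu => by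
    simp [D, projectionOnto_apply_of_mem_left _ hu]
  have hDb : ∀ i, U.liftQ D hUD (e i) = D (b i) := fun i => by
    rw [← hb, mkQ_apply, liftQ_apply]
  have hD : U.liftQ D hUD = 0 := by
    refine LinearMap.eq_zero_of_ker_ne_bot_of_apply_zero_add_eq_zero e hg ?_ ?_
    · rw [hDb, hDb, LinearMap.sub_apply, LinearMap.sub_apply, map_sub, sub_add_sub_comm]
      exact sub_eq_zero.mpr hcol
    · obtain ⟨v, ⟨hv₁, hv₂⟩, hv⟩ := exists_mem_ne_zero_of_ne_bot hmeet
      have hvU : v ∉ U := fun hvU =>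
        hv ((disjoint_iff_inf_le.mp h₁.disjoint) ⟨hvU, hv₁⟩)
      refine (Submodule.ne_bot_iff _).mpr ⟨U.mkQ v, ?_, by simpa using hvU⟩
      simp [D, projectionOnto_apply_of_mem_right _ hv₁, projectionOnto_apply_of_mem_right _ hv₂]
  have hP : D = 0 := by
    rw [← U.liftQ_mkQ D hUD, hD, LinearMap.zero_comp]
  rw [← ker_projectionOnto h₁, ← ker_projectionOnto h₂, sub_eq_zero.mp hP]

theorem range_inf_eq_bot_of_leftInverse_mkQ {s : V ⧸ U →ₗ[F] V}
    (hs : Function.LeftInverse U.mkQ s) : range s ⊓ U = ⊥ := by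
  rw [eq_bot_iff]
  rintro _ ⟨⟨y, rfl⟩, hy⟩
  have hy0 : y = 0 := by
    rw [← hs y]
    exact (Quotient.mk_eq_zero U).mpr hy
  simp [hy0]

theorem eq_of_range_eq_of_leftInverse_mkQ {s s' : V ⧸ U →ₗ[F] V}
    (hs : Function.LeftInverse U.mkQ s) (hs' : Function.LeftInverse U.mkQ s')
    (h : range s = range s') : s = s' := by
  refine LinearMap.ext fun y => ?_
  obtain ⟨y', hy'⟩ : s y ∈ range s' := h ▸ LinearMap.mem_range_self s y
  have hyy' : y' = y := by
    rw [← hs y, ← hs' y', hy']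
  rw [← hy', hyy']

theorem exists_pairwise_meeting_complements (e : Basis (Fin 2) F (V ⧸ U)) {s : V ⧸ U →ₗ[F] V}
    (hs : Function.LeftInverse U.mkQ s) :
    ∃ L : U → Submodule F V, (∀ u, finrank F (L u) = 2 ∧ L u ⊓ U = ⊥) ∧
      ∀ u u', u ≠ u' → L u ≠ L u' ∧ L u ⊓ L u' ≠ ⊥ := by
  let s' : U → V ⧸ U →ₗ[F] V := fun u => s + U.subtype ∘ₗ (e.coord 0).smulRight u
  have hs' : ∀ u, Function.LeftInverse U.mkQ (s' u) := fun u y => by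
    have hy : Submodule.Quotient.mk (s y) = y := hs y
    simp [s', hy, (Quotient.mk_eq_zero U).mpr u.2]
  have hs'e : ∀ u i, s' u (e i) = s (e i) + (if i = 0 then (u : V) else 0) := fun u i => by
    fin_cases i <;> simp [s']
  refine ⟨fun u => range (s' u), fun u => ⟨?_, range_inf_eq_bot_of_leftInverse_mkQ (hs' u)⟩,
    fun u u' huu' => ⟨fun h => huu' ?_, ?_⟩⟩
  · rw [LinearMap.finrank_range_of_inj, finrank_eq_card_basis e, Fintype.card_fin]
    exact (hs' u).injective
  · have := LinearMap.congr_fun (eq_of_range_eq_of_leftInverse_mkQ (hs' u) (hs' u') h) (e 0)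
    simpa [hs'e] using this
  · have hmem : ∀ u, s (e 1) ∈ range (s' u) := fun u => ⟨e 1, by simp [hs'e]⟩
    refine (Submodule.ne_bot_iff _).mpr ⟨s (e 1), ⟨hmem u, hmem u'⟩, fun h0 => ?_⟩
    exact e.ne_zero 1 (by rw [← hs (e 1), h0, map_zero])

end Complements

theorem stmt_10 (q n : ℕ) (hn : 3 ≤ n) (F : Type) [Field F] [Fintype F]
    (hq : Fintype.card F = q)
    (U : Submodule F (Fin (n + 1) → F)) (hU : Module.finrank F U = n - 1) :
    sInf {c : ℕ | ∃ f : {W : Submodule F (Fin (n + 1) → F) //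
          Module.finrank F W = 2 ∧ W ⊓ U = ⊥} → Fin c,
        ∀ W₁ W₂, W₁ ≠ W₂ → W₁.1 ⊓ W₂.1 ≠ ⊥ → f W₁ ≠ f W₂} = q ^ (n - 1) := by
  have hQ : finrank F ((Fin (n + 1) → F) ⧸ U) = 2 := by
    have := U.finrank_quotient_add_finrank
    rw [finrank_fin_fun, hU] at this
    omega
  let e := finBasisOfFinrankEq F _ hQ
  obtain ⟨s, hs⟩ := U.mkQ.exists_rightInverse_of_surjective U.range_mkQ
  obtain ⟨g, hg⟩ := exists_end_forall_ne_smul F (U := U) (by omega)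
  obtain ⟨L, hL, hLmeet⟩ := exists_pairwise_meeting_complements e (LinearMap.congr_fun hs)
  have hcompl : ∀ W : {W : Submodule F (Fin (n + 1) → F) // finrank F W = 2 ∧ W ⊓ U = ⊥},
      IsCompl U W.1 := fun W => isCompl_of_inf_eq_bot_of_finrank_eq (W.2.1.trans hQ.symm) W.2.2
  have hcard : Nat.card U = q ^ (n - 1) := by
    rw [Module.natCard_eq_pow_finrank (K := F), hU, Nat.card_eq_fintype_card, hq]
  rw [← hcard]
  exact sInf_properColoring_eq_natCard (fun W₁ W₂ => W₁.1 ⊓ W₂.1 ≠ ⊥)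
    (fun W => complColor g (s ∘ e) (hcompl W))
    (fun W₁ W₂ hne => complColor_ne e hg (fun i => LinearMap.congr_fun hs (e i)) _ _
      (Subtype.coe_injective.ne hne))
    (fun u => ⟨L u, hL u⟩) fun u u' h => ⟨fun h' => (hLmeet u u' h).1 (congrArg Subtype.val h'),
      (hLmeet u u' h).2⟩
end

section
/- Let β be a primitive element of F_{q^{n+1}} and α = β^{(q^{n+1}-1)/(q-1)}. For every j ∈ F_{q^{n-1}}, the set B_j of blocks {(x,u2),(y,u2'),(x+y,u2+u2'),...,(x+α^{q-2}y,u2+α^{q-2}u2')} with u2 + β u2' = j forms a parallel class of the transversal design TD(q+1, q^{n-1}): the blocks in B_j are pairwise disjoint and there are q^{n-1} of them. -/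
theorem stmt_11 (q n : ℕ) (hq : 2 ≤ q) (hn : 3 ≤ n) (E : Type) [Field E] [Fintype E]
    (hE : Fintype.card E = q ^ (n - 1)) (α β : E) (hβ0 : β ≠ 0)
    (hβ : ∀ k ≤ q - 2, β ≠ α ^ k) (j : E) :
    Nat.card {p : E × E // p.1 + β * p.2 = j} = q ^ (n - 1) ∧
    ∀ p p' : E × E, p.1 + β * p.2 = j → p'.1 + β * p'.2 = j → p ≠ p' →
      p.1 ≠ p'.1 ∧ p.2 ≠ p'.2 ∧
        ∀ k ≤ q - 2, p.1 + α ^ k * p.2 ≠ p'.1 + α ^ k * p'.2 := by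
  have key : ∀ p p' : E × E, p.1 + β * p.2 = j → p'.1 + β * p'.2 = j →
      p.2 = p'.2 → p = p' := by
    intro p p' h1 h2 h3
    refine Prod.ext ?_ h3
    have h4 := h1.trans h2.symm
    rw [h3] at h4
    linear_combination h4
  constructor
  · have e : {p : E × E // p.1 + β * p.2 = j} ≃ E :=
      { toFun := fun p => p.1.2
        invFun := fun x => ⟨(j - β * x, x), by ring⟩
        left_inv := by
          rintro ⟨⟨a, b⟩, hp⟩
          simp only at hp
          exact Subtype.ext (Prod.ext (by linear_combination -hp) rfl)
        right_inv := fun x => rfl }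
    rw [Nat.card_congr e, Nat.card_eq_fintype_card, hE]
  · intro p p' h1 h2 hne
    have h2ne : p.2 ≠ p'.2 := fun h => hne (key p p' h1 h2 h)
    refine ⟨?_, h2ne, ?_⟩
    · intro h
      have h4 := h1.trans h2.symm
      rw [h] at h4
      exact h2ne (mul_left_cancel₀ hβ0 (by linear_combination h4))
    · intro k hk h
      have h4 := h1.trans h2.symm
      have h5 : (β - α ^ k) * (p.2 - p'.2) = 0 := by linear_combination h4 - h
      rcases mul_eq_zero.mp h5 with h6 | h6
      · exact hβ k hk (by linear_combination h6)
      · exact h2ne (by linear_combination h6)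
end

section
/- If PG(3,q) admits a spread S_0 consisting of one line from the short Singer orbit and exactly q lines from each of the q full Singer orbits, then PG(3,q) has property E: there is a spread P and a family S of (q^4-1)/(q-1) spreads such that every line of P lies in exactly q+1 spreads of S, every line not in P lies in exactly q spreads of S, and no spread in S contains two lines of P. -/
section Aux


variable {α : Type*} [DecidableEq α]

lemma aux_orbit_dvd (F : Finset α) (f : ℕ → α → α)
    (hcomp : ∀ i j x, f i (f j x) = f (i + j) x) (h0 : ∀ x, f 0 x = x)
    (d : ℕ) (hd : 0 < d) (hcycle : ∀ x, f d x = x)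
    (hmaps : ∀ i, ∀ x ∈ F, f i x ∈ F)
    (hfree : ∀ x ∈ F, ∀ i, i < d → f i x = x → i = 0) :
    d ∣ F.card := by
  have hdm : ∀ m x, f (d * m) x = x := by
    intro m
    induction m with
    | zero => simpa using h0
    | succ n ih =>
      intro x
      have : d * (n + 1) = d * n + d := by ring
      rw [this, ← hcomp, hcycle, ih]
  have hmod : ∀ i x, f i x = f (i % d) x := by
    intro i x
    conv_lhs => rw [show i = i % d + d * (i / d) from (Nat.mod_add_div i d).symm, ← hcomp, hdm]
  classical
  set φ : α → Finset α := fun x => (Finset.range d).image (f · x) with hφ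
  have hcard : ∀ x ∈ F, (φ x).card = d := by
    intro x hx
    rw [hφ]
    rw [Finset.card_image_of_injOn, Finset.card_range]
    intro i hi j hj hij
    simp only [Finset.mem_coe, Finset.mem_range] at hi hj
    by_contra hne
    rcases Nat.lt_or_ge i j with h | h
    · have h1 : f (d - j + i) x = x := by
        have := congrArg (f (d - j)) hij
        rw [hcomp, hcomp] at this
        rw [show d - j + j = d by omega] at this
        rw [hcycle] at this
        exact this
      have := hfree x hx _ (by omega) h1
      omega
    · have hlt : j < i := by omega
      have h1 : f (d - i + j) x = x := by
        have := congrArg (f (d - i)) hij.symm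
        rw [hcomp, hcomp] at this
        rw [show d - i + i = d by omega] at this
        rw [hcycle] at this
        exact this
      have := hfree x hx _ (by omega) h1
      omega
  have hkey : ∀ x ∈ F, ∀ y, y ∈ φ x ↔ (y ∈ F ∧ φ y = φ x) := by
    intro x hx y
    constructor
    · intro hy
      rw [hφ] at hy
      simp only [Finset.mem_image, Finset.mem_range] at hy
      obtain ⟨i, hi, rfl⟩ := hy
      refine ⟨hmaps i x hx, ?_⟩
      apply Finset.eq_of_subset_of_card_le
      · intro z hz
        simp only [hφ, Finset.mem_image, Finset.mem_range] at hz ⊢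
        obtain ⟨j, hj, rfl⟩ := hz
        exact ⟨(j + i) % d, Nat.mod_lt _ hd, by rw [← hmod, ← hcomp]⟩
      · rw [hcard x hx, hcard _ (hmaps i x hx)]
    · rintro ⟨hyF, hxy⟩
      rw [← hxy, hφ]
      simp only [Finset.mem_image, Finset.mem_range]
      exact ⟨0, hd, h0 y⟩
  have := Finset.card_eq_sum_card_fiberwise (f := φ) (s := F) (t := F.image φ)
    (fun x hx => Finset.mem_image_of_mem φ hx)
  rw [this]
  have hsum : ∀ B ∈ F.image φ, (F.filter (fun y => φ y = B)).card = d := by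
    intro B hB
    simp only [Finset.mem_image] at hB
    obtain ⟨x, hx, rfl⟩ := hB
    have : F.filter (fun y => φ y = φ x) = φ x := by
      ext y
      simp only [Finset.mem_filter]
      rw [hkey x hx y]
    rw [this, hcard x hx]
  rw [Finset.sum_congr rfl hsum, Finset.sum_const, smul_eq_mul]
  exact dvd_mul_left d _

end Aux

section Tr

variable {n : ℕ}

def tr (t : ZMod n) (L : Finset (ZMod n)) : Finset (ZMod n) := L.image (· + t)

lemma mem_tr {t : ZMod n} {L : Finset (ZMod n)} {x : ZMod n} :
    x ∈ tr t L ↔ x - t ∈ L := by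
  simp only [tr, Finset.mem_image]
  constructor
  · rintro ⟨y, hy, rfl⟩; simpa using hy
  · intro h; exact ⟨x - t, h, by ring⟩

lemma tr_tr (s t : ZMod n) (L : Finset (ZMod n)) : tr s (tr t L) = tr (t + s) L := by
  ext x; rw [mem_tr, mem_tr, mem_tr, sub_sub, add_comm s t]

lemma tr_zero (L : Finset (ZMod n)) : tr 0 L = L := by
  ext x; simp [mem_tr]

lemma tr_card (t : ZMod n) (L : Finset (ZMod n)) : (tr t L).card = L.card := by
  apply Finset.card_image_of_injective
  exact add_left_injective t

lemma tr_inj {t : ZMod n} {L M : Finset (ZMod n)} (h : tr t L = tr t M) : L = M := by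
  have := congrArg (tr (-t)) h
  rwa [tr_tr, tr_tr, add_neg_cancel, tr_zero, tr_zero] at this

lemma tr_eq_iff {t : ZMod n} {L M : Finset (ZMod n)} : tr t L = M ↔ L = tr (-t) M := by
  constructor
  · rintro rfl; rw [tr_tr, add_neg_cancel, tr_zero]
  · rintro rfl; rw [tr_tr, neg_add_cancel, tr_zero]

end Tr

theorem stmt_13 (q : ℕ) (hq : 2 ≤ q) [NeZero ((q + 1) * (q ^ 2 + 1))]
    (Lines : Finset (Finset (ZMod ((q + 1) * (q ^ 2 + 1)))))
    (IsSpread : Finset (Finset (ZMod ((q + 1) * (q ^ 2 + 1)))) → Prop)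
    (hIsSpread : ∀ S, IsSpread S ↔ ((∀ L ∈ S, L ∈ Lines) ∧ S.card = q ^ 2 + 1 ∧
      (∀ L₁ ∈ S, ∀ L₂ ∈ S, L₁ ≠ L₂ → Disjoint L₁ L₂) ∧
      ∀ x : ZMod ((q + 1) * (q ^ 2 + 1)), ∃ L ∈ S, x ∈ L))
    (orb : Finset (ZMod ((q + 1) * (q ^ 2 + 1))) →
      Finset (Finset (ZMod ((q + 1) * (q ^ 2 + 1)))))
    (horb : ∀ L, orb L = Finset.image (fun t => Finset.image (· + t) L) Finset.univ)
    (hline_card : ∀ L ∈ Lines, L.card = q + 1)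
    (hSteiner : ∀ x y : ZMod ((q + 1) * (q ^ 2 + 1)), x ≠ y →
      ∃! L, L ∈ Lines ∧ x ∈ L ∧ y ∈ L)
    (hinv : ∀ L ∈ Lines, Finset.image (· + 1) L ∈ Lines)
    (L₀ : Finset (ZMod ((q + 1) * (q ^ 2 + 1))))
    (hL₀ : L₀ = Finset.image
      (fun j : Fin (q + 1) => ((j : ℕ) : ZMod ((q + 1) * (q ^ 2 + 1))) * (q ^ 2 + 1))
      Finset.univ)
    (hL₀mem : L₀ ∈ Lines)
    (S₀ : Finset (Finset (ZMod ((q + 1) * (q ^ 2 + 1)))))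
    (hS₀ : IsSpread S₀) (hS₀L₀ : L₀ ∈ S₀)
    (hS₀short : (S₀.filter (· ∈ orb L₀)).card = 1)
    (hS₀full : ∀ L ∈ Lines, L ∉ orb L₀ → (S₀.filter (· ∈ orb L)).card = q) :
    ∃ (P : Finset (Finset (ZMod ((q + 1) * (q ^ 2 + 1)))))
      (S : Finset (Finset (Finset (ZMod ((q + 1) * (q ^ 2 + 1)))))),
      IsSpread P ∧ (∀ T ∈ S, IsSpread T) ∧ S.card = (q ^ 4 - 1) / (q - 1) ∧
      (∀ L ∈ P, (S.filter (fun T => L ∈ T)).card = q + 1) ∧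
      (∀ L ∈ Lines, L ∉ P → (S.filter (fun T => L ∈ T)).card = q) ∧
      ∀ T ∈ S, ∀ L₁ ∈ P, ∀ L₂ ∈ P, L₁ ∈ T → L₂ ∈ T → L₁ = L₂ := by
  classical
  -- basic cast facts
  have hv0 : (((q + 1) * (q ^ 2 + 1) : ℕ) : ZMod ((q + 1) * (q ^ 2 + 1))) = 0 :=
    ZMod.natCast_self _
  -- characterization of L₀
  have hmemL₀ : ∀ z : ZMod ((q + 1) * (q ^ 2 + 1)), z ∈ L₀ ↔
      ((q : ZMod ((q + 1) * (q ^ 2 + 1))) + 1) * z = 0 := by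
    intro z
    constructor
    · intro hz
      rw [hL₀] at hz
      simp only [Finset.mem_image, Finset.mem_univ, true_and] at hz
      obtain ⟨j, rfl⟩ := hz
      have h0 := hv0
      push_cast at h0 ⊢
      linear_combination ((j : ℕ) : ZMod ((q + 1) * (q ^ 2 + 1))) * h0
    · intro hz
      have hzv : ((z.val : ℕ) : ZMod ((q + 1) * (q ^ 2 + 1))) = z :=
        ZMod.natCast_rightInverse z
      have h1 : (((q + 1) * z.val : ℕ) : ZMod ((q + 1) * (q ^ 2 + 1))) = 0 := by
        push_cast
        rw [hzv]
        exact hz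
      rw [ZMod.natCast_eq_zero_iff] at h1
      have h2 : (q ^ 2 + 1) ∣ z.val :=
        (Nat.mul_dvd_mul_iff_left (show 0 < q + 1 by omega)).mp h1
      obtain ⟨m, hm⟩ := h2
      have hmlt : m < q + 1 := by
        have hzlt : z.val < (q + 1) * (q ^ 2 + 1) := ZMod.val_lt z
        by_contra h
        push_neg at h
        have : (q + 1) * (q ^ 2 + 1) ≤ (q ^ 2 + 1) * m := by
          calc (q + 1) * (q ^ 2 + 1) ≤ m * (q ^ 2 + 1) := by
                apply Nat.mul_le_mul_right; omega
            _ = (q ^ 2 + 1) * m := by ring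
        omega
      rw [hL₀]
      simp only [Finset.mem_image, Finset.mem_univ, true_and]
      refine ⟨⟨m, hmlt⟩, ?_⟩
      rw [← hzv, hm]
      push_cast
      ring
  have h0L₀ : (0 : ZMod ((q + 1) * (q ^ 2 + 1))) ∈ L₀ := by rw [hmemL₀]; exact mul_zero _
  have hL₀add : ∀ a b : ZMod ((q + 1) * (q ^ 2 + 1)), a ∈ L₀ → b ∈ L₀ → a + b ∈ L₀ := by
    intro a b ha hb
    rw [hmemL₀] at ha hb ⊢
    linear_combination ha + hb
  have hL₀sub : ∀ a b : ZMod ((q + 1) * (q ^ 2 + 1)), a ∈ L₀ → b ∈ L₀ → a - b ∈ L₀ := by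
    intro a b ha hb
    rw [hmemL₀] at ha hb ⊢
    linear_combination ha - hb
  have htrL₀ : ∀ c : ZMod ((q + 1) * (q ^ 2 + 1)), c ∈ L₀ → tr c L₀ = L₀ := by
    intro c hc
    apply Finset.eq_of_subset_of_card_le
    · intro x hx
      rw [mem_tr] at hx
      have := hL₀add _ _ hx hc
      simpa using this
    · rw [tr_card]
  have hstabL₀ : ∀ c : ZMod ((q + 1) * (q ^ 2 + 1)), tr c L₀ = L₀ ↔ c ∈ L₀ := by
    intro c
    constructor
    · intro h
      have : c ∈ tr c L₀ := by rw [mem_tr]; simpa using h0L₀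
      rwa [h] at this
    · exact htrL₀ c
  -- all translates of lines are lines
  have hLines_tr : ∀ L ∈ Lines, ∀ c : ZMod ((q + 1) * (q ^ 2 + 1)), tr c L ∈ Lines := by
    intro L hL c
    have key : ∀ k : ℕ, tr ((k : ℕ) : ZMod ((q + 1) * (q ^ 2 + 1))) L ∈ Lines := by
      intro k
      induction k with
      | zero => simpa [tr_zero] using hL
      | succ n ih =>
        have h1 : tr ((n + 1 : ℕ) : ZMod ((q + 1) * (q ^ 2 + 1))) L
            = Finset.image (· + 1) (tr ((n : ℕ) : ZMod ((q + 1) * (q ^ 2 + 1))) L) := by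
          rw [show (Finset.image (· + 1) (tr ((n : ℕ) : ZMod ((q + 1) * (q ^ 2 + 1))) L))
              = tr 1 (tr ((n : ℕ) : ZMod ((q + 1) * (q ^ 2 + 1))) L) from rfl, tr_tr]
          push_cast
          ring_nf
        rw [h1]
        exact hinv _ ih
    have : c = ((c.val : ℕ) : ZMod ((q + 1) * (q ^ 2 + 1))) :=
      (ZMod.natCast_rightInverse c).symm
    rw [this]
    exact key c.val
  -- orbit membership
  have hmem_orb : ∀ L M : Finset (ZMod ((q + 1) * (q ^ 2 + 1))), M ∈ orb L ↔ ∃ t, tr t L = M := by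
    intro L M
    rw [horb L]
    simp only [Finset.mem_image, Finset.mem_univ, true_and]
    rfl
  have horb_tr : ∀ (L M : Finset (ZMod ((q + 1) * (q ^ 2 + 1))))
      (c : ZMod ((q + 1) * (q ^ 2 + 1))), M ∈ orb L → tr c M ∈ orb L := by
    intro L M c hM
    rw [hmem_orb] at hM ⊢
    obtain ⟨t, rfl⟩ := hM
    exact ⟨t + c, (tr_tr c t L).symm⟩
  have horb_tr_iff : ∀ (L M : Finset (ZMod ((q + 1) * (q ^ 2 + 1))))
      (c : ZMod ((q + 1) * (q ^ 2 + 1))), tr c M ∈ orb L ↔ M ∈ orb L := by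
    intro L M c
    constructor
    · intro h
      have := horb_tr L _ (-c) h
      rwa [tr_tr, add_neg_cancel, tr_zero] at this
    · exact horb_tr L M c
    -- disjointness of translates of L₀
  have hPdisj : ∀ L₁ ∈ orb L₀, ∀ L₂ ∈ orb L₀, L₁ ≠ L₂ → Disjoint L₁ L₂ := by
    intro L₁ h₁ L₂ h₂ hne
    rw [hmem_orb] at h₁ h₂
    obtain ⟨s, rfl⟩ := h₁
    obtain ⟨t, rfl⟩ := h₂
    rw [Finset.disjoint_left]
    intro x hx₁ hx₂
    rw [mem_tr] at hx₁ hx₂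
    apply hne
    have hts : t - s ∈ L₀ := by
      have h5 : t - s = (x - s) - (x - t) := by ring
      rw [h5]
      exact hL₀sub _ _ hx₁ hx₂
    have h4 : tr s (tr (t - s) L₀) = tr (t - s + s) L₀ := tr_tr _ _ _
    rw [htrL₀ _ hts, show t - s + s = t by ring] at h4
    exact h4
  have hPcover : ∀ x : ZMod ((q + 1) * (q ^ 2 + 1)), ∃ L ∈ orb L₀, x ∈ L := by
    intro x
    refine ⟨tr x L₀, (hmem_orb _ _).mpr ⟨x, rfl⟩, ?_⟩
    rw [mem_tr]
    simpa using h0L₀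
  have hPcard : (orb L₀).card = q ^ 2 + 1 := by
    have himg : orb L₀ = (Finset.range (q ^ 2 + 1)).image (fun i : ℕ => tr ((i : ℕ) : ZMod ((q + 1) * (q ^ 2 + 1))) L₀) := by
      ext M
      rw [hmem_orb]
      simp only [Finset.mem_image, Finset.mem_range]
      constructor
      · rintro ⟨t, rfl⟩
        refine ⟨t.val % (q ^ 2 + 1), Nat.mod_lt _ (by omega), ?_⟩
        have ht : ((t.val : ℕ) : ZMod ((q + 1) * (q ^ 2 + 1))) = t := ZMod.natCast_rightInverse t
        have hsplit : t.val = t.val % (q ^ 2 + 1) + (q ^ 2 + 1) * (t.val / (q ^ 2 + 1)) :=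
          (Nat.mod_add_div _ _).symm
        have hmem : t - ((t.val % (q ^ 2 + 1) : ℕ) : ZMod ((q + 1) * (q ^ 2 + 1))) ∈ L₀ := by
          rw [hmemL₀]
          have e1 : ((t.val : ℕ) : ZMod ((q + 1) * (q ^ 2 + 1))) = ((t.val % (q ^ 2 + 1) : ℕ) : ZMod ((q + 1) * (q ^ 2 + 1)))
              + (((q ^ 2 + 1) * (t.val / (q ^ 2 + 1)) : ℕ) : ZMod ((q + 1) * (q ^ 2 + 1))) := by
            rw [← Nat.cast_add, ← hsplit]
          have e2 : t - ((t.val % (q ^ 2 + 1) : ℕ) : ZMod ((q + 1) * (q ^ 2 + 1)))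
              = (((q ^ 2 + 1) * (t.val / (q ^ 2 + 1)) : ℕ) : ZMod ((q + 1) * (q ^ 2 + 1))) := by
            linear_combination e1 - ht
          rw [e2]
          have e3 : ((q : ZMod ((q + 1) * (q ^ 2 + 1))) + 1) * (((q ^ 2 + 1) * (t.val / (q ^ 2 + 1)) : ℕ) : ZMod ((q + 1) * (q ^ 2 + 1)))
              = (((q + 1) * (q ^ 2 + 1) * (t.val / (q ^ 2 + 1)) : ℕ) : ZMod ((q + 1) * (q ^ 2 + 1))) := by
            push_cast; ring
          rw [e3, Nat.cast_mul, hv0, zero_mul]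
        have h6 : tr ((t.val % (q ^ 2 + 1) : ℕ) : ZMod ((q + 1) * (q ^ 2 + 1)))
            (tr (t - ((t.val % (q ^ 2 + 1) : ℕ) : ZMod ((q + 1) * (q ^ 2 + 1)))) L₀) = tr t L₀ := by
          rw [tr_tr, show t - ((t.val % (q ^ 2 + 1) : ℕ) : ZMod ((q + 1) * (q ^ 2 + 1)))
            + ((t.val % (q ^ 2 + 1) : ℕ) : ZMod ((q + 1) * (q ^ 2 + 1))) = t by ring]
        rw [htrL₀ _ hmem] at h6
        exact h6
      · rintro ⟨i, hi, rfl⟩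
        exact ⟨_, rfl⟩
    rw [himg, Finset.card_image_of_injOn, Finset.card_range]
    intro i hi j hj hij
    simp only [Finset.mem_coe, Finset.mem_range] at hi hj
    have hd : ((j : ℕ) : ZMod ((q + 1) * (q ^ 2 + 1))) - ((i : ℕ) : ZMod ((q + 1) * (q ^ 2 + 1))) ∈ L₀ := by
      rw [← hstabL₀]
      have h7 := congrArg (tr (-((i : ℕ) : ZMod ((q + 1) * (q ^ 2 + 1))))) hij
      rw [tr_tr, tr_tr,
        show ((i : ℕ) : ZMod ((q + 1) * (q ^ 2 + 1))) + -((i : ℕ) : ZMod ((q + 1) * (q ^ 2 + 1))) = 0 by ring, tr_zero,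
        show ((j : ℕ) : ZMod ((q + 1) * (q ^ 2 + 1))) + -((i : ℕ) : ZMod ((q + 1) * (q ^ 2 + 1))) = ((j : ℕ) : ZMod ((q + 1) * (q ^ 2 + 1))) - ((i : ℕ) : ZMod ((q + 1) * (q ^ 2 + 1))) by ring] at h7
      exact h7.symm
    rw [hmemL₀] at hd
    have h8 : (((q + 1) * j : ℕ) : ZMod ((q + 1) * (q ^ 2 + 1))) = (((q + 1) * i : ℕ) : ZMod ((q + 1) * (q ^ 2 + 1))) := by
      push_cast
      linear_combination hd
    rw [ZMod.natCast_eq_natCast_iff] at h8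
    have h9 : (q + 1) * j % ((q + 1) * (q ^ 2 + 1)) = (q + 1) * i % ((q + 1) * (q ^ 2 + 1)) := h8
    rw [Nat.mod_eq_of_lt (by nlinarith), Nat.mod_eq_of_lt (by nlinarith)] at h9
    exact Nat.eq_of_mul_eq_mul_left (by omega) h9.symm ▸ rfl
  have hPspread : IsSpread (orb L₀) := by
    rw [hIsSpread]
    refine ⟨?_, hPcard, hPdisj, hPcover⟩
    intro L hL
    rw [hmem_orb] at hL
    obtain ⟨t, rfl⟩ := hL
    exact hLines_tr L₀ hL₀mem t
  -- trivial stabilizer for lines outside the short orbit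
  have hstab : ∀ L ∈ Lines, ∀ c : ZMod ((q + 1) * (q ^ 2 + 1)), c ≠ 0 → tr c L = L → L ∈ orb L₀ := by
    intro L hL c hc htr
    have hclosed : ∀ x ∈ L, x + c ∈ L := by
      intro x hx
      rw [← htr, mem_tr]
      simpa using hx
    have hd : 0 < addOrderOf c := addOrderOf_pos c
    have hdvd : addOrderOf c ∣ L.card := by
      apply aux_orbit_dvd L (fun i x => x + i • c)
      · intro i j x
        rw [add_nsmul]; abel
      · intro x; rw [zero_nsmul, add_zero]
      · exact hd
      · intro x; rw [addOrderOf_nsmul_eq_zero, add_zero]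
      · intro i x hx
        induction i with
        | zero => simpa using hx
        | succ n ih => rw [succ_nsmul, ← add_assoc]; exact hclosed _ ih
      · intro x hx i hid hfix
        have h1 : i • c = 0 := by
          have := hfix
          nth_rewrite 2 [show x = x + 0 by rw [add_zero]] at this
          exact add_left_cancel this
        have h2 : addOrderOf c ∣ i := addOrderOf_dvd_iff_nsmul_eq_zero.mpr h1
        rcases Nat.eq_zero_or_pos i with h | h
        · exact h
        · exact absurd (Nat.le_of_dvd h h2) (by omega)
    rw [hline_card L hL] at hdvd
    have hqc : ((q : ZMod ((q + 1) * (q ^ 2 + 1))) + 1) * c = 0 := by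
      have h1 : (q + 1) • c = 0 := addOrderOf_dvd_iff_nsmul_eq_zero.mp hdvd
      rw [nsmul_eq_mul] at h1
      push_cast at h1
      exact h1
    have hcL₀ : c ∈ L₀ := (hmemL₀ c).mpr hqc
    have hLne : L.Nonempty := by
      rw [← Finset.card_pos, hline_card L hL]; omega
    obtain ⟨x, hx⟩ := hLne
    have hxc : x + c ∈ L := hclosed x hx
    have hne : x ≠ x + c := by
      intro h
      apply hc
      have h2 : x + c = x + 0 := by rw [add_zero]; exact h.symm
      exact add_left_cancel h2
    obtain ⟨N, hN, huniq⟩ := hSteiner x (x + c) hne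
    have h1 : L = N := huniq L ⟨hL, hx, hxc⟩
    have h2 : tr x L₀ = N := by
      apply huniq
      refine ⟨hLines_tr L₀ hL₀mem x, ?_, ?_⟩
      · rw [mem_tr]; simpa using h0L₀
      · rw [mem_tr]; simpa using hcL₀
    rw [hmem_orb]
    exact ⟨x, by rw [h2, ← h1]⟩
    -- S₀ basic facts
  obtain ⟨hS₀lines, hS₀card, hS₀disj, hS₀cover⟩ := (hIsSpread S₀).mp hS₀
  have hL₀orb : L₀ ∈ orb L₀ := (hmem_orb _ _).mpr ⟨0, tr_zero L₀⟩
  have hSfilter : S₀.filter (· ∈ orb L₀) = {L₀} := by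
    obtain ⟨a, ha⟩ := Finset.card_eq_one.mp hS₀short
    have : L₀ ∈ S₀.filter (· ∈ orb L₀) := Finset.mem_filter.mpr ⟨hS₀L₀, hL₀orb⟩
    rw [ha] at this
    rw [ha, Finset.mem_singleton.mp this]
  have hshort_unique : ∀ M ∈ S₀, M ∈ orb L₀ → M = L₀ := by
    intro M hM hMo
    have : M ∈ S₀.filter (· ∈ orb L₀) := Finset.mem_filter.mpr ⟨hM, hMo⟩
    rw [hSfilter] at this
    exact Finset.mem_singleton.mp this
  -- the family of translated spreads
  set Φ : ZMod ((q + 1) * (q ^ 2 + 1)) → Finset (Finset (ZMod ((q + 1) * (q ^ 2 + 1)))) := fun t => S₀.image (tr t) with hΦ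
  have hΦmem : ∀ (t : ZMod ((q + 1) * (q ^ 2 + 1))) (M : Finset (ZMod ((q + 1) * (q ^ 2 + 1)))), M ∈ Φ t ↔ tr (-t) M ∈ S₀ := by
    intro t M
    rw [hΦ]
    simp only [Finset.mem_image]
    constructor
    · rintro ⟨N, hN, rfl⟩
      rwa [tr_tr, add_neg_cancel, tr_zero]
    · intro h
      exact ⟨tr (-t) M, h, by rw [tr_tr, neg_add_cancel, tr_zero]⟩
  have hΦspread : ∀ t : ZMod ((q + 1) * (q ^ 2 + 1)), IsSpread (Φ t) := by
    intro t
    rw [hIsSpread]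
    refine ⟨?_, ?_, ?_, ?_⟩
    · intro L hL
      rw [hΦ] at hL
      simp only [Finset.mem_image] at hL
      obtain ⟨N, hN, rfl⟩ := hL
      exact hLines_tr N (hS₀lines N hN) t
    · rw [hΦ]
      rw [Finset.card_image_of_injective _ (fun a b h => tr_inj h), hS₀card]
    · intro L₁ h₁ L₂ h₂ hne
      rw [hΦ] at h₁ h₂
      simp only [Finset.mem_image] at h₁ h₂
      obtain ⟨N₁, hN₁, rfl⟩ := h₁
      obtain ⟨N₂, hN₂, rfl⟩ := h₂
      have hN : N₁ ≠ N₂ := fun h => hne (by rw [h])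
      have := hS₀disj N₁ hN₁ N₂ hN₂ hN
      rw [Finset.disjoint_left] at this ⊢
      intro a ha₁ ha₂
      rw [mem_tr] at ha₁ ha₂
      exact this ha₁ ha₂
    · intro x
      obtain ⟨L, hL, hxL⟩ := hS₀cover (x - t)
      refine ⟨tr t L, ?_, ?_⟩
      · rw [hΦ]; exact Finset.mem_image_of_mem _ hL
      · rw [mem_tr]; exact hxL
  -- injectivity of Φ
  have hΦinj : Function.Injective Φ := by
    intro a b hab
    have hcomp : ∀ s t : ZMod ((q + 1) * (q ^ 2 + 1)), (S₀.image (tr s)).image (tr t) = S₀.image (tr (s + t)) := by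
      intro s t
      rw [Finset.image_image]
      apply Finset.image_congr
      intro N _
      exact tr_tr t s N
    have hc0 : S₀.image (tr (b + -a)) = S₀ := by
      have h1 := congrArg (fun X => X.image (tr (-a))) hab
      rw [hΦ] at h1
      simp only [hcomp] at h1
      rw [show a + -a = 0 by ring] at h1
      have h2 : S₀.image (tr 0) = S₀ := by
        apply Finset.image_congr (fun N _ => tr_zero N) |>.trans
        exact Finset.image_id
      rw [h2] at h1
      exact h1.symm
    set c : ZMod ((q + 1) * (q ^ 2 + 1)) := b + -a with hcdef
    -- show c = 0
    by_contra hne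
    have hcne : c ≠ 0 := by
      intro h
      apply hne
      have : b = a := by rw [hcdef] at h; linear_combination h
      rw [this]
    -- step A : c ∈ L₀, so addOrderOf c divides q + 1
    have hcS : tr c L₀ ∈ S₀ := by
      rw [← hc0]
      exact Finset.mem_image_of_mem _ hS₀L₀
    have hcorb : tr c L₀ ∈ orb L₀ := (hmem_orb _ _).mpr ⟨c, rfl⟩
    have hcL₀ : c ∈ L₀ := by
      rw [← hstabL₀]
      exact hshort_unique _ hcS hcorb
    have hdvd1 : addOrderOf c ∣ q + 1 := by
      rw [addOrderOf_dvd_iff_nsmul_eq_zero, nsmul_eq_mul]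
      have := (hmemL₀ c).mp hcL₀
      push_cast
      linear_combination this
    -- step B : consider the full lines of S₀
    set F : Finset (Finset (ZMod ((q + 1) * (q ^ 2 + 1)))) := S₀.filter (· ∉ orb L₀) with hF
    have hFcard : F.card = q ^ 2 := by
      have := Finset.card_filter_add_card_filter_not (s := S₀) (p := (· ∈ orb L₀))
      rw [hS₀short, hS₀card] at this
      have h2 : F.card + 1 = q ^ 2 + 1 := by
        rw [hF]
        omega
      omega
    have htrS₀ : ∀ i : ℕ, ∀ N ∈ S₀, tr (i • c) N ∈ S₀ := by
      intro i
      induction i with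
      | zero => intro N hN; rw [zero_nsmul, tr_zero]; exact hN
      | succ n ih =>
        intro N hN
        have h1 : tr ((n + 1) • c) N = tr c (tr (n • c) N) := by
          rw [tr_tr, succ_nsmul]
        rw [h1, ← hc0]
        exact Finset.mem_image_of_mem _ (ih N hN)
    have hdvd2 : addOrderOf c ∣ q ^ 2 := by
      have haux : addOrderOf c ∣ F.card := by
        apply aux_orbit_dvd F (fun i M => tr (i • c) M)
        · intro i j M
          rw [tr_tr, ← add_nsmul, Nat.add_comm j i]
        · intro M; rw [zero_nsmul, tr_zero]
        · exact addOrderOf_pos c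
        · intro M; rw [addOrderOf_nsmul_eq_zero, tr_zero]
        · intro i M hM
          rw [hF, Finset.mem_filter] at hM ⊢
          refine ⟨htrS₀ i M hM.1, ?_⟩
          rw [horb_tr_iff]
          exact hM.2
        · intro M hM i hilt hfix
          by_contra hi0
          have hicne : i • c ≠ 0 := by
            intro h
            have := addOrderOf_dvd_iff_nsmul_eq_zero.mpr h
            rcases Nat.eq_zero_or_pos i with h' | h'
            · exact hi0 h'
            · exact absurd (Nat.le_of_dvd h' this) (by omega)
          have hMLines : M ∈ Lines := by
            rw [hF, Finset.mem_filter] at hM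
            exact hS₀lines M hM.1
          have := hstab M hMLines (i • c) hicne hfix
          rw [hF, Finset.mem_filter] at hM
          exact hM.2 this
      rwa [hFcard] at haux
    -- coprimality gives addOrderOf c = 1
    have hcop : Nat.gcd (q + 1) (q ^ 2) = 1 := by
      have h1 : Nat.Coprime (q + 1) q := by
        simpa using Nat.coprime_succ_self q
      exact Nat.Coprime.pow_right 2 h1
    have hgcd : addOrderOf c ∣ Nat.gcd (q + 1) (q ^ 2) := Nat.dvd_gcd hdvd1 hdvd2
    rw [hcop] at hgcd
    have hc1 : addOrderOf c = 1 := Nat.dvd_one.mp hgcd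
    rw [AddMonoid.addOrderOf_eq_one_iff] at hc1
    exact hcne hc1
    -- the arithmetic identity
  have harith : (q ^ 4 - 1) / (q - 1) = (q + 1) * (q ^ 2 + 1) := by
    obtain ⟨r, rfl⟩ : ∃ r, q = r + 2 := ⟨q - 2, by omega⟩
    have e : (r + 2) ^ 4 = ((r + 2 + 1) * ((r + 2) ^ 2 + 1)) * (r + 2 - 1) + 1 := by
      rw [show r + 2 - 1 = r + 1 by omega]
      ring
    rw [Nat.sub_eq_of_eq_add e, Nat.mul_div_cancel _ (by omega : 0 < r + 2 - 1)]
  set S : Finset (Finset (Finset (ZMod ((q + 1) * (q ^ 2 + 1))))) := Finset.univ.image Φ with hS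
  have hScard : S.card = (q ^ 4 - 1) / (q - 1) := by
    rw [harith, hS, Finset.card_image_of_injective _ hΦinj, Finset.card_univ, ZMod.card]
  -- counting helper
  have hfilter : ∀ L : Finset (ZMod ((q + 1) * (q ^ 2 + 1))), (S.filter (fun T => L ∈ T)).card
      = (Finset.univ.filter (fun t : ZMod ((q + 1) * (q ^ 2 + 1)) => L ∈ Φ t)).card := by
    intro L
    rw [hS, Finset.filter_image, Finset.card_image_of_injective _ hΦinj]
  -- (a) lines of P lie in exactly q+1 spreads
  have hcountP : ∀ L ∈ orb L₀, (S.filter (fun T => L ∈ T)).card = q + 1 := by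
    intro L hL
    rw [hmem_orb] at hL
    obtain ⟨s, rfl⟩ := hL
    rw [hfilter]
    have hset : Finset.univ.filter (fun t : ZMod ((q + 1) * (q ^ 2 + 1)) => tr s L₀ ∈ Φ t)
        = L₀.image (fun a => s - a) := by
      ext t
      simp only [Finset.mem_filter, Finset.mem_univ, true_and, Finset.mem_image]
      rw [hΦmem, tr_tr]
      constructor
      · intro h
        have horb2 : tr (s + -t) L₀ ∈ orb L₀ := (hmem_orb _ _).mpr ⟨_, rfl⟩
        have h5 := hshort_unique _ h horb2
        rw [hstabL₀] at h5
        exact ⟨s + -t, h5, by ring⟩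
      · rintro ⟨a, ha, rfl⟩
        rw [show s + -(s - a) = a by ring, htrL₀ _ ha]
        exact hS₀L₀
    rw [hset, Finset.card_image_of_injective _ sub_right_injective, hline_card L₀ hL₀mem]
  -- (b) lines not in P lie in exactly q spreads
  have hcountQ : ∀ L ∈ Lines, L ∉ orb L₀ → (S.filter (fun T => L ∈ T)).card = q := by
    intro L hL hLo
    rw [hfilter]
    have hbij : (Finset.univ.filter (fun t : ZMod ((q + 1) * (q ^ 2 + 1)) => L ∈ Φ t)).card
        = (S₀.filter (· ∈ orb L)).card := by
      apply Finset.card_bij (fun t _ => tr (-t) L)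
      · intro t ht
        simp only [Finset.mem_filter, Finset.mem_univ, true_and] at ht
        rw [hΦmem] at ht
        exact Finset.mem_filter.mpr ⟨ht, (hmem_orb _ _).mpr ⟨-t, rfl⟩⟩
      · intro t₁ h₁ t₂ h₂ heq
        by_contra hne
        have hc : -t₁ + t₂ ≠ 0 := by
          intro h
          apply hne
          linear_combination -h
        have h6 : tr (-t₁ + t₂) L = L := by
          have h7 := congrArg (tr t₂) heq
          rw [tr_tr, tr_tr, show -t₂ + t₂ = 0 by ring, tr_zero] at h7
          exact h7
        exact hLo (hstab L hL _ hc h6)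
      · intro M hM
        rw [Finset.mem_filter] at hM
        obtain ⟨hMS, hMo⟩ := hM
        rw [hmem_orb] at hMo
        obtain ⟨u, rfl⟩ := hMo
        refine ⟨-u, ?_, ?_⟩
        · simp only [Finset.mem_filter, Finset.mem_univ, true_and]
          rw [hΦmem, neg_neg]
          exact hMS
        · rw [neg_neg]
    rw [hbij]
    exact hS₀full L hL hLo
  -- (c) no spread of S contains two lines of P
  have hnotwo : ∀ T ∈ S, ∀ L₁ ∈ orb L₀, ∀ L₂ ∈ orb L₀, L₁ ∈ T → L₂ ∈ T → L₁ = L₂ := by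
    intro T hT L₁ h₁ L₂ h₂ hT₁ hT₂
    rw [hS] at hT
    simp only [Finset.mem_image, Finset.mem_univ, true_and] at hT
    obtain ⟨t, rfl⟩ := hT
    have key : ∀ M ∈ orb L₀, M ∈ Φ t → M = tr t L₀ := by
      intro M hMo hMt
      rw [hΦmem] at hMt
      have h3 : tr (-t) M ∈ orb L₀ := by rw [horb_tr_iff]; exact hMo
      have h4 := hshort_unique _ hMt h3
      have h5 := congrArg (tr t) h4
      rw [tr_tr, show -t + t = 0 by ring, tr_zero] at h5
      exact h5
    rw [key L₁ h₁ hT₁, key L₂ h₂ hT₂]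
  -- assemble
  refine ⟨orb L₀, S, hPspread, ?_, hScard, hcountP, hcountQ, hnotwo⟩
  intro T hT
  rw [hS] at hT
  simp only [Finset.mem_image, Finset.mem_univ, true_and] at hT
  obtain ⟨t, rfl⟩ := hT
  exact hΦspread t
end

section
/- In PG(3,2) with points identified with Z_15 via a Singer cycle, the set {{1,12,13},{3,4,7},{6,8,14},{2,9,11},{0,5,10}} is a spread, and its 15 translates {S + 5j + i mod 15 : 0 ≤ i ≤ 4, 0 ≤ j ≤ 2} form a family of spreads witnessing that PG(3,2) has property E. -/
def zech : ZMod 15 → ZMod 15 := fun k =>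
  ([0,4,8,14,1,10,13,9,2,7,5,12,11,6,3] : List (ZMod 15)).getD k.val 0

theorem char_two (F : Type) [Field F] [Fintype F] (hF : Fintype.card F = 16) :
    (1 : F) + 1 = 0 := by
  obtain ⟨n, hp, hn⟩ := FiniteField.card F (ringChar F)
  have hdvd : ringChar F ∣ 16 := by
    rw [hF] at hn
    rcases n with ⟨n, hn0⟩
    exact hn ▸ dvd_pow_self (ringChar F) (by simpa using (by omega : n ≠ 0))
  have h2 : ringChar F = 2 :=
    (Nat.prime_dvd_prime_iff_eq hp Nat.prime_two).mp
      (hp.dvd_of_dvd_pow (show ringChar F ∣ 2 ^ 4 by norm_num [hdvd]))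
  have := CharP.cast_eq_zero F (ringChar F)
  rw [h2] at this
  rw [show ((2:ℕ):F) = 1 + 1 by push_cast; ring] at this
  exact this

theorem zech_eq {F : Type} [Field F] (x : F) (hx : x ^ 4 + x + 1 = 0)
    (h2 : (1 : F) + 1 = 0) (k : ZMod 15) (hk : k ≠ 0) :
    1 + x ^ k.val = x ^ (zech k).val := by
  fin_cases k
  · exact absurd rfl hk
  · show (1:F) + x ^ 1 = x ^ 4
    linear_combination (norm := ring_nf) ((-1)*1) * hx + (1 + x) * h2
  · show (1:F) + x ^ 2 = x ^ 8
    linear_combination (norm := ring_nf) (1 + x + (-1)*x^4) * hx + ((-1)*x) * h2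
  · show (1:F) + x ^ 3 = x ^ 14
    linear_combination (norm := ring_nf) ((3)*1 + x + (-1)*x^2 + (-2)*x^3 + (-1)*x^4 + x^6 + x^7 + (-1)*x^10) * hx + ((-1)*1 + (-2)*x + (2)*x^3) * h2
  · show (1:F) + x ^ 4 = x ^ 1
    linear_combination (norm := ring_nf) (1) * hx + ((-1)*x) * h2
  · show (1:F) + x ^ 5 = x ^ 10
    linear_combination (norm := ring_nf) ((-1)*1 + x + x^2 + x^3 + (-1)*x^6) * hx + (1 + (-1)*x^2 + (-1)*x^3) * h2
  · show (1:F) + x ^ 6 = x ^ 13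
    linear_combination (norm := ring_nf) (1 + (-1)*x + (-1)*x^2 + (-1)*x^3 + x^5 + x^6 + (-1)*x^9) * hx + (x^2 + x^3) * h2
  · show (1:F) + x ^ 7 = x ^ 9
    linear_combination (norm := ring_nf) ((-1)*1 + x + x^2 + x^3 + (-1)*x^5) * hx + (1 + (-1)*x^2 + (-1)*x^3) * h2
  · show (1:F) + x ^ 8 = x ^ 2
    linear_combination (norm := ring_nf) ((-1)*1 + (-1)*x + x^4) * hx + (1 + x) * h2
  · show (1:F) + x ^ 9 = x ^ 7
    linear_combination (norm := ring_nf) (1 + (-1)*x + (-1)*x^2 + (-1)*x^3 + x^5) * hx + (x^2 + x^3) * h2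
  · show (1:F) + x ^ 10 = x ^ 5
    linear_combination (norm := ring_nf) (1 + (-1)*x + (-1)*x^2 + (-1)*x^3 + x^6) * hx + (x^2 + x^3) * h2
  · show (1:F) + x ^ 11 = x ^ 12
    linear_combination (norm := ring_nf) (1 + (-1)*x + (-1)*x^2 + (-1)*x^3 + x^5 + x^7 + (-1)*x^8) * hx + (x^2 + x^3) * h2
  · show (1:F) + x ^ 12 = x ^ 11
    linear_combination (norm := ring_nf) ((-1)*1 + x + x^2 + x^3 + (-1)*x^5 + (-1)*x^7 + x^8) * hx + (1 + (-1)*x^2 + (-1)*x^3) * h2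
  · show (1:F) + x ^ 13 = x ^ 6
    linear_combination (norm := ring_nf) ((-1)*1 + x + x^2 + x^3 + (-1)*x^5 + (-1)*x^6 + x^9) * hx + (1 + (-1)*x^2 + (-1)*x^3) * h2
  · show (1:F) + x ^ 14 = x ^ 3
    linear_combination (norm := ring_nf) ((-3)*1 + (-1)*x + x^2 + (2)*x^3 + x^4 + (-1)*x^6 + (-1)*x^7 + x^10) * hx + ((2)*1 + (2)*x + (-2)*x^3) * h2

theorem pow_char {F : Type} [Field F] (x : F) (hord : orderOf x = 15)
    (hz : ∀ k : ZMod 15, k ≠ 0 → 1 + x ^ k.val = x ^ (zech k).val)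
    (a b c : ZMod 15) (hab : a ≠ b) :
    (x ^ a.val + x ^ b.val = x ^ c.val) ↔ c = a + zech (b - a) := by
  have hx15 : x ^ 15 = 1 := hord ▸ pow_orderOf_eq_one x
  have hxne : x ≠ 0 := by
    rintro rfl
    simp at hx15
  have hu : IsUnit x := isUnit_iff_ne_zero.mpr hxne
  have huo : orderOf hu.unit = 15 := by
    rw [← orderOf_units, hu.unit_spec]; exact hord
  have hpow : ∀ n : ℕ, x ^ n = ↑(hu.unit ^ n) := fun n => by
    rw [Units.val_pow_eq_pow_val, hu.unit_spec]
  have hiff : ∀ m n : ℕ, x ^ m = x ^ n ↔ m ≡ n [MOD 15] := by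
    intro m n
    rw [hpow m, hpow n]
    have h1 : hu.unit ^ m = hu.unit ^ n ↔ m ≡ n [MOD 15] := by
      rw [pow_eq_pow_iff_modEq, huo]
    exact ⟨fun h => h1.mp (Units.ext h), fun h => congrArg Units.val (h1.mpr h)⟩
  have hmod : ∀ i j : ZMod 15, x ^ i.val = x ^ j.val ↔ i = j := by
    intro i j
    rw [hiff]
    constructor
    · intro h
      have h1 := i.val_lt
      have h2 := j.val_lt
      have h3 : i.val = j.val := by unfold Nat.ModEq at h; omega
      exact ZMod.val_injective 15 h3
    · rintro rfl; rfl
  have hadd : ∀ i j : ZMod 15, x ^ (i + j).val = x ^ i.val * x ^ j.val := by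
    intro i j
    rw [← pow_add, hiff, ZMod.val_add]
    exact (Nat.mod_modEq _ 15)
  have hk : b - a ≠ 0 := sub_ne_zero.mpr (Ne.symm hab)
  have hb : x ^ b.val = x ^ a.val * x ^ (b - a).val := by
    rw [← hadd]; congr 1; ring
  have key : x ^ a.val + x ^ b.val = x ^ (a + zech (b - a)).val := by
    rw [hb, hadd, ← mul_one_add, hz _ hk]
  rw [key, hmod]
  exact eq_comm

theorem zech_ne : ∀ k : ZMod 15, k ≠ 0 → zech k ≠ 0 ∧ zech k ≠ k := by decide

def linesList : List (Finset (ZMod 15)) :=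
  [(⟨{0, 1, 4}, by decide⟩ : Finset (ZMod 15)), (⟨{0, 2, 8}, by decide⟩ : Finset (ZMod 15)), (⟨{0, 3, 14}, by decide⟩ : Finset (ZMod 15)), (⟨{0, 5, 10}, by decide⟩ : Finset (ZMod 15)), (⟨{0, 6, 13}, by decide⟩ : Finset (ZMod 15)), (⟨{0, 7, 9}, by decide⟩ : Finset (ZMod 15)), (⟨{0, 11, 12}, by decide⟩ : Finset (ZMod 15)), (⟨{1, 2, 5}, by decide⟩ : Finset (ZMod 15)), (⟨{1, 3, 9}, by decide⟩ : Finset (ZMod 15)), (⟨{1, 6, 11}, by decide⟩ : Finset (ZMod 15)), (⟨{1, 7, 14}, by decide⟩ : Finset (ZMod 15)), (⟨{1, 8, 10}, by decide⟩ : Finset (ZMod 15)), (⟨{1, 12, 13}, by decide⟩ : Finset (ZMod 15)), (⟨{2, 3, 6}, by decide⟩ : Finset (ZMod 15)), (⟨{2, 4, 10}, by decide⟩ : Finset (ZMod 15)), (⟨{2, 7, 12}, by decide⟩ : Finset (ZMod 15)), (⟨{2, 9, 11}, by decide⟩ : Finset (ZMod 15)), (⟨{2, 13, 14}, by decide⟩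 : Finset (ZMod 15)), (⟨{3, 4, 7}, by decide⟩ : Finset (ZMod 15)), (⟨{3, 5, 11}, by decide⟩ : Finset (ZMod 15)), (⟨{3, 8, 13}, by decide⟩ : Finset (ZMod 15)), (⟨{3, 10, 12}, by decide⟩ : Finset (ZMod 15)), (⟨{4, 5, 8}, by decide⟩ : Finset (ZMod 15)), (⟨{4, 6, 12}, by decide⟩ : Finset (ZMod 15)), (⟨{4, 9, 14}, by decide⟩ : Finset (ZMod 15)), (⟨{4, 11, 13}, by decide⟩ : Finset (ZMod 15)), (⟨{5, 6, 9}, by decide⟩ : Finset (ZMod 15)), (⟨{5, 7, 13}, by decide⟩ : Finset (ZMod 15)), (⟨{5, 12, 14}, by decide⟩ : Finset (ZMod 15)), (⟨{6, 7, 10}, by decide⟩ : Finset (ZMod 15)), (⟨{6, 8, 14}, by decide⟩ : Finset (ZMod 15)), (⟨{7, 8, 11}, by decide⟩ : Finset (ZMod 15)), (⟨{8, 9, 12}, by decide⟩ : Finset (ZMod 15)), (⟨{9, 10, 13}, by decide⟩ : Finset (ZMod 15)), (⟨{10, 11, 14}, by decide⟩ : Finset (ZMod 15))]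

def S0List : List (Finset (ZMod 15)) := [(⟨{1, 12, 13}, by decide⟩ : Finset (ZMod 15)), (⟨{3, 4, 7}, by decide⟩ : Finset (ZMod 15)), (⟨{6, 8, 14}, by decide⟩ : Finset (ZMod 15)), (⟨{2, 9, 11}, by decide⟩ : Finset (ZMod 15)), (⟨{0, 5, 10}, by decide⟩ : Finset (ZMod 15))]

def PList : List (Finset (ZMod 15)) := [(⟨{0, 5, 10}, by decide⟩ : Finset (ZMod 15)), (⟨{1, 6, 11}, by decide⟩ : Finset (ZMod 15)), (⟨{2, 7, 12}, by decide⟩ : Finset (ZMod 15)), (⟨{3, 8, 13}, by decide⟩ : Finset (ZMod 15)), (⟨{4, 9, 14}, by decide⟩ : Finset (ZMod 15))]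

def spreadsList : List (Finset (Finset (ZMod 15))) :=
  [(⟨(↑([(⟨{0, 5, 10}, by decide⟩ : Finset (ZMod 15)), (⟨{1, 12, 13}, by decide⟩ : Finset (ZMod 15)), (⟨{2, 9, 11}, by decide⟩ : Finset (ZMod 15)), (⟨{3, 4, 7}, by decide⟩ : Finset (ZMod 15)), (⟨{6, 8, 14}, by decide⟩ : Finset (ZMod 15))]) : Multiset (Finset (ZMod 15))), by decide⟩ : Finset (Finset (ZMod 15))),
   (⟨(↑([(⟨{0, 7, 9}, by decide⟩ : Finset (ZMod 15)), (⟨{1, 6, 11}, by decide⟩ : Finset (ZMod 15)), (⟨{2, 13, 14}, by decide⟩ : Finset (ZMod 15)), (⟨{3, 10, 12}, by decide⟩ : Finset (ZMod 15)), (⟨{4, 5, 8}, by decide⟩ : Finset (ZMod 15))]) : Multiset (Finset (ZMod 15))), by decide⟩ : Finset (Finset (ZMod 15))),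
   (⟨(↑([(⟨{0, 3, 14}, by decide⟩ : Finset (ZMod 15)), (⟨{1, 8, 10}, by decide⟩ : Finset (ZMod 15)), (⟨{2, 7, 12}, by decide⟩ : Finset (ZMod 15)), (⟨{4, 11, 13}, by decide⟩ : Finset (ZMod 15)), (⟨{5, 6, 9}, by decide⟩ : Finset (ZMod 15))]) : Multiset (Finset (ZMod 15))), by decide⟩ : Finset (Finset (ZMod 15))),
   (⟨(↑([(⟨{0, 1, 4}, by decide⟩ : Finset (ZMod 15)), (⟨{2, 9, 11}, by decide⟩ : Finset (ZMod 15)), (⟨{3, 8, 13}, by decide⟩ : Finset (ZMod 15)), (⟨{5, 12, 14}, by decide⟩ : Finset (ZMod 15)), (⟨{6, 7, 10}, by decide⟩ : Finset (ZMod 15))]) : Multiset (Finset (ZMod 15))), by decide⟩ : Finset (Finset (ZMod 15))),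
   (⟨(↑([(⟨{0, 6, 13}, by decide⟩ : Finset (ZMod 15)), (⟨{1, 2, 5}, by decide⟩ : Finset (ZMod 15)), (⟨{3, 10, 12}, by decide⟩ : Finset (ZMod 15)), (⟨{4, 9, 14}, by decide⟩ : Finset (ZMod 15)), (⟨{7, 8, 11}, by decide⟩ : Finset (ZMod 15))]) : Multiset (Finset (ZMod 15))), by decide⟩ : Finset (Finset (ZMod 15))),
   (⟨(↑([(⟨{0, 5, 10}, by decide⟩ : Finset (ZMod 15)), (⟨{1, 7, 14}, by decide⟩ : Finset (ZMod 15)), (⟨{2, 3, 6}, by decide⟩ : Finset (ZMod 15)), (⟨{4, 11, 13}, by decide⟩ : Finset (ZMod 15)), (⟨{8, 9, 12}, by decide⟩ : Finset (ZMod 15))]) : Multiset (Finset (ZMod 15))), by decide⟩ : Finset (Finset (ZMod 15))),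
   (⟨(↑([(⟨{0, 2, 8}, by decide⟩ : Finset (ZMod 15)), (⟨{1, 6, 11}, by decide⟩ : Finset (ZMod 15)), (⟨{3, 4, 7}, by decide⟩ : Finset (ZMod 15)), (⟨{5, 12, 14}, by decide⟩ : Finset (ZMod 15)), (⟨{9, 10, 13}, by decide⟩ : Finset (ZMod 15))]) : Multiset (Finset (ZMod 15))), by decide⟩ : Finset (Finset (ZMod 15))),
   (⟨(↑([(⟨{0, 6, 13}, by decide⟩ : Finset (ZMod 15)), (⟨{1, 3, 9}, by decide⟩ : Finset (ZMod 15)), (⟨{2, 7, 12}, by decide⟩ : Finset (ZMod 15)), (⟨{4, 5, 8}, by decide⟩ : Finset (ZMod 15)), (⟨{10, 11, 14}, by decide⟩ : Finset (ZMod 15))]) : Multiset (Finset (ZMod 15))), by decide⟩ : Finset (Finset (ZMod 15))),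
   (⟨(↑([(⟨{0, 11, 12}, by decide⟩ : Finset (ZMod 15)), (⟨{1, 7, 14}, by decide⟩ : Finset (ZMod 15)), (⟨{2, 4, 10}, by decide⟩ : Finset (ZMod 15)), (⟨{3, 8, 13}, by decide⟩ : Finset (ZMod 15)), (⟨{5, 6, 9}, by decide⟩ : Finset (ZMod 15))]) : Multiset (Finset (ZMod 15))), by decide⟩ : Finset (Finset (ZMod 15))),
   (⟨(↑([(⟨{0, 2, 8}, by decide⟩ : Finset (ZMod 15)), (⟨{1, 12, 13}, by decide⟩ : Finset (ZMod 15)), (⟨{3, 5, 11}, by decide⟩ : Finset (ZMod 15)), (⟨{4, 9, 14}, by decide⟩ : Finset (ZMod 15)), (⟨{6, 7, 10}, by decide⟩ : Finset (ZMod 15))]) : Multiset (Finset (ZMod 15))), by decide⟩ : Finset (Finset (ZMod 15))),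
   (⟨(↑([(⟨{0, 5, 10}, by decide⟩ : Finset (ZMod 15)), (⟨{1, 3, 9}, by decide⟩ : Finset (ZMod 15)), (⟨{2, 13, 14}, by decide⟩ : Finset (ZMod 15)), (⟨{4, 6, 12}, by decide⟩ : Finset (ZMod 15)), (⟨{7, 8, 11}, by decide⟩ : Finset (ZMod 15))]) : Multiset (Finset (ZMod 15))), by decide⟩ : Finset (Finset (ZMod 15))),
   (⟨(↑([(⟨{0, 3, 14}, by decide⟩ : Finset (ZMod 15)), (⟨{1, 6, 11}, by decide⟩ : Finset (ZMod 15)), (⟨{2, 4, 10}, by decide⟩ : Finset (ZMod 15)), (⟨{5, 7, 13}, by decide⟩ : Finset (ZMod 15)), (⟨{8, 9, 12}, by decide⟩ : Finset (ZMod 15))]) : Multiset (Finset (ZMod 15))), by decide⟩ : Finset (Finset (ZMod 15))),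
   (⟨(↑([(⟨{0, 1, 4}, by decide⟩ : Finset (ZMod 15)), (⟨{2, 7, 12}, by decide⟩ : Finset (ZMod 15)), (⟨{3, 5, 11}, by decide⟩ : Finset (ZMod 15)), (⟨{6, 8, 14}, by decide⟩ : Finset (ZMod 15)), (⟨{9, 10, 13}, by decide⟩ : Finset (ZMod 15))]) : Multiset (Finset (ZMod 15))), by decide⟩ : Finset (Finset (ZMod 15))),
   (⟨(↑([(⟨{0, 7, 9}, by decide⟩ : Finset (ZMod 15)), (⟨{1, 2, 5}, by decide⟩ : Finset (ZMod 15)), (⟨{3, 8, 13}, by decide⟩ : Finset (ZMod 15)), (⟨{4, 6, 12}, by decide⟩ : Finset (ZMod 15)), (⟨{10, 11, 14}, by decide⟩ : Finset (ZMod 15))]) : Multiset (Finset (ZMod 15))), by decide⟩ : Finset (Finset (ZMod 15))),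
   (⟨(↑([(⟨{0, 11, 12}, by decide⟩ : Finset (ZMod 15)), (⟨{1, 8, 10}, by decide⟩ : Finset (ZMod 15)), (⟨{2, 3, 6}, by decide⟩ : Finset (ZMod 15)), (⟨{4, 9, 14}, by decide⟩ : Finset (ZMod 15)), (⟨{5, 7, 13}, by decide⟩ : Finset (ZMod 15))]) : Multiset (Finset (ZMod 15))), by decide⟩ : Finset (Finset (ZMod 15)))]

def spreadLL : List (List (Finset (ZMod 15))) :=
  [[(⟨{0, 5, 10}, by decide⟩ : Finset (ZMod 15)), (⟨{1, 12, 13}, by decide⟩ : Finset (ZMod 15)), (⟨{2, 9, 11}, by decide⟩ : Finset (ZMod 15)), (⟨{3, 4, 7}, by decide⟩ : Finset (ZMod 15)), (⟨{6, 8, 14}, by decide⟩ : Finset (ZMod 15))],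
   [(⟨{0, 7, 9}, by decide⟩ : Finset (ZMod 15)), (⟨{1, 6, 11}, by decide⟩ : Finset (ZMod 15)), (⟨{2, 13, 14}, by decide⟩ : Finset (ZMod 15)), (⟨{3, 10, 12}, by decide⟩ : Finset (ZMod 15)), (⟨{4, 5, 8}, by decide⟩ : Finset (ZMod 15))],
   [(⟨{0, 3, 14}, by decide⟩ : Finset (ZMod 15)), (⟨{1, 8, 10}, by decide⟩ : Finset (ZMod 15)), (⟨{2, 7, 12}, by decide⟩ : Finset (ZMod 15)), (⟨{4, 11, 13}, by decide⟩ : Finset (ZMod 15)), (⟨{5, 6, 9}, by decide⟩ : Finset (ZMod 15))],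
   [(⟨{0, 1, 4}, by decide⟩ : Finset (ZMod 15)), (⟨{2, 9, 11}, by decide⟩ : Finset (ZMod 15)), (⟨{3, 8, 13}, by decide⟩ : Finset (ZMod 15)), (⟨{5, 12, 14}, by decide⟩ : Finset (ZMod 15)), (⟨{6, 7, 10}, by decide⟩ : Finset (ZMod 15))],
   [(⟨{0, 6, 13}, by decide⟩ : Finset (ZMod 15)), (⟨{1, 2, 5}, by decide⟩ : Finset (ZMod 15)), (⟨{3, 10, 12}, by decide⟩ : Finset (ZMod 15)), (⟨{4, 9, 14}, by decide⟩ : Finset (ZMod 15)), (⟨{7, 8, 11}, by decide⟩ : Finset (ZMod 15))],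
   [(⟨{0, 5, 10}, by decide⟩ : Finset (ZMod 15)), (⟨{1, 7, 14}, by decide⟩ : Finset (ZMod 15)), (⟨{2, 3, 6}, by decide⟩ : Finset (ZMod 15)), (⟨{4, 11, 13}, by decide⟩ : Finset (ZMod 15)), (⟨{8, 9, 12}, by decide⟩ : Finset (ZMod 15))],
   [(⟨{0, 2, 8}, by decide⟩ : Finset (ZMod 15)), (⟨{1, 6, 11}, by decide⟩ : Finset (ZMod 15)), (⟨{3, 4, 7}, by decide⟩ : Finset (ZMod 15)), (⟨{5, 12, 14}, by decide⟩ : Finset (ZMod 15)), (⟨{9, 10, 13}, by decide⟩ : Finset (ZMod 15))],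
   [(⟨{0, 6, 13}, by decide⟩ : Finset (ZMod 15)), (⟨{1, 3, 9}, by decide⟩ : Finset (ZMod 15)), (⟨{2, 7, 12}, by decide⟩ : Finset (ZMod 15)), (⟨{4, 5, 8}, by decide⟩ : Finset (ZMod 15)), (⟨{10, 11, 14}, by decide⟩ : Finset (ZMod 15))],
   [(⟨{0, 11, 12}, by decide⟩ : Finset (ZMod 15)), (⟨{1, 7, 14}, by decide⟩ : Finset (ZMod 15)), (⟨{2, 4, 10}, by decide⟩ : Finset (ZMod 15)), (⟨{3, 8, 13}, by decide⟩ : Finset (ZMod 15)), (⟨{5, 6, 9}, by decide⟩ : Finset (ZMod 15))],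
   [(⟨{0, 2, 8}, by decide⟩ : Finset (ZMod 15)), (⟨{1, 12, 13}, by decide⟩ : Finset (ZMod 15)), (⟨{3, 5, 11}, by decide⟩ : Finset (ZMod 15)), (⟨{4, 9, 14}, by decide⟩ : Finset (ZMod 15)), (⟨{6, 7, 10}, by decide⟩ : Finset (ZMod 15))],
   [(⟨{0, 5, 10}, by decide⟩ : Finset (ZMod 15)), (⟨{1, 3, 9}, by decide⟩ : Finset (ZMod 15)), (⟨{2, 13, 14}, by decide⟩ : Finset (ZMod 15)), (⟨{4, 6, 12}, by decide⟩ : Finset (ZMod 15)), (⟨{7, 8, 11}, by decide⟩ : Finset (ZMod 15))],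
   [(⟨{0, 3, 14}, by decide⟩ : Finset (ZMod 15)), (⟨{1, 6, 11}, by decide⟩ : Finset (ZMod 15)), (⟨{2, 4, 10}, by decide⟩ : Finset (ZMod 15)), (⟨{5, 7, 13}, by decide⟩ : Finset (ZMod 15)), (⟨{8, 9, 12}, by decide⟩ : Finset (ZMod 15))],
   [(⟨{0, 1, 4}, by decide⟩ : Finset (ZMod 15)), (⟨{2, 7, 12}, by decide⟩ : Finset (ZMod 15)), (⟨{3, 5, 11}, by decide⟩ : Finset (ZMod 15)), (⟨{6, 8, 14}, by decide⟩ : Finset (ZMod 15)), (⟨{9, 10, 13}, by decide⟩ : Finset (ZMod 15))],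
   [(⟨{0, 7, 9}, by decide⟩ : Finset (ZMod 15)), (⟨{1, 2, 5}, by decide⟩ : Finset (ZMod 15)), (⟨{3, 8, 13}, by decide⟩ : Finset (ZMod 15)), (⟨{4, 6, 12}, by decide⟩ : Finset (ZMod 15)), (⟨{10, 11, 14}, by decide⟩ : Finset (ZMod 15))],
   [(⟨{0, 11, 12}, by decide⟩ : Finset (ZMod 15)), (⟨{1, 8, 10}, by decide⟩ : Finset (ZMod 15)), (⟨{2, 3, 6}, by decide⟩ : Finset (ZMod 15)), (⟨{4, 9, 14}, by decide⟩ : Finset (ZMod 15)), (⟨{5, 7, 13}, by decide⟩ : Finset (ZMod 15))]]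

def T0lit : Finset (Finset (Finset (ZMod 15))) := ⟨(↑spreadsList : Multiset _), by decide⟩

def P0lit : Finset (Finset (ZMod 15)) := ⟨(↑PList : Multiset _), by decide⟩

set_option maxRecDepth 8000

def S0 : Finset (Finset (ZMod 15)) :=
  {{1, 12, 13}, {3, 4, 7}, {6, 8, 14}, {2, 9, 11}, {0, 5, 10}}
def T0 : Finset (Finset (Finset (ZMod 15))) :=
  Finset.image (fun t : ZMod 15 => S0.image fun L => L.image (· + t)) Finset.univ
def P0 : Finset (Finset (ZMod 15)) :=
  Finset.image (fun i : Fin 5 => Finset.image (· + ((i : ℕ) : ZMod 15))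
    ({0, 5, 10} : Finset (ZMod 15))) Finset.univ
def S0Fin : Finset (Finset (ZMod 15)) := ⟨(↑S0List : Multiset _), by decide⟩

theorem A3 : T0 = T0lit := by decide
theorem A4 : P0 = P0lit := by decide
theorem AS0 : S0 = S0Fin := by decide
theorem A5 : T0lit.card = 15 := by decide
theorem A6 : spreadLL.Forall fun l => l.Forall fun L => L ∈ linesList := by decide
theorem A2a : spreadLL.Forall fun l => l.Forall fun L₁ => l.Forall fun L₂ =>
    L₁ ≠ L₂ → L₁ ∩ L₂ = ∅ := by decide
theorem A2b : spreadLL.Forall fun l => ∀ p : ZMod 15, ∃ L ∈ l, p ∈ L := by decide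
theorem AS6 : S0List.Forall fun L => L ∈ linesList := by decide
theorem AS2a : S0List.Forall fun L₁ => S0List.Forall fun L₂ =>
    L₁ ≠ L₂ → L₁ ∩ L₂ = ∅ := by decide
theorem AS2b : ∀ p : ZMod 15, ∃ L ∈ S0List, p ∈ L := by decide
theorem A7 : PList.Forall fun L => (T0lit.filter fun sp => L ∈ sp).card = 3 := by decide
theorem A9 : spreadsList.Forall fun sp => PList.Forall fun L₁ => PList.Forall fun L₂ =>
    L₁ ∈ sp → L₂ ∈ sp → L₁ = L₂ := by decide
theorem A8 : ∀ a b : ZMod 15, a ≠ b → ({a, b, a + zech (b - a)} : Finset (ZMod 15)) ∉ P0lit →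
    (T0lit.filter fun sp => ({a, b, a + zech (b - a)} : Finset (ZMod 15)) ∈ sp).card = 2 := by
  decide
theorem Amem : spreadsList.Forall fun sp => ∃ l ∈ spreadLL, sp.val = ↑l := by decide

theorem stmt_14 (F : Type) [Field F] [Fintype F] (hF : Fintype.card F = 16)
    (x : F) (hx : x ^ 4 + x + 1 = 0) (hord : orderOf x = 15) :
    let S₀ : Finset (Finset (ZMod 15)) :=
      {{1, 12, 13}, {3, 4, 7}, {6, 8, 14}, {2, 9, 11}, {0, 5, 10}}
    let IsLine : Finset (ZMod 15) → Prop := fun L =>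
      ∃ a b c : ZMod 15, a ≠ b ∧ b ≠ c ∧ a ≠ c ∧ L = {a, b, c} ∧
        x ^ a.val + x ^ b.val = x ^ c.val
    let IsSpread : Finset (Finset (ZMod 15)) → Prop := fun S =>
      (∀ L ∈ S, IsLine L) ∧ (∀ L₁ ∈ S, ∀ L₂ ∈ S, L₁ ≠ L₂ → Disjoint L₁ L₂) ∧
        ∀ p : ZMod 15, ∃ L ∈ S, p ∈ L
    let T : Finset (Finset (Finset (ZMod 15))) :=
      Finset.image (fun t : ZMod 15 => S₀.image fun L => L.image (· + t)) Finset.univ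
    let P : Finset (Finset (ZMod 15)) :=
      Finset.image (fun i : Fin 5 => Finset.image (· + ((i : ℕ) : ZMod 15))
        ({0, 5, 10} : Finset (ZMod 15))) Finset.univ
    IsSpread S₀ ∧ T.card = 15 ∧ (∀ sp ∈ T, IsSpread sp) ∧
      (∀ L ∈ P, (T.filter fun sp => L ∈ sp).card = 3) ∧
      (∀ L : Finset (ZMod 15), IsLine L → L ∉ P → (T.filter fun sp => L ∈ sp).card = 2) ∧
      ∀ sp ∈ T, ∀ L₁ ∈ P, ∀ L₂ ∈ P, L₁ ∈ sp → L₂ ∈ sp → L₁ = L₂ := by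
  intro S₀ IsLine IsSpread T P
  have h2 : (1 : F) + 1 = 0 := char_two F hF
  have hz : ∀ k : ZMod 15, k ≠ 0 → 1 + x ^ k.val = x ^ (zech k).val :=
    fun k hk => zech_eq x hx h2 k hk
  have hchar := pow_char x hord hz
  have hline : ∀ (a b c : ZMod 15) (L : Finset (ZMod 15)), a ≠ b → c = a + zech (b - a) →
      L = {a, b, c} → IsLine L := by
    intro a b c L hab hc hL
    have hk : b - a ≠ 0 := sub_ne_zero.mpr (Ne.symm hab)
    obtain ⟨hz0, hzk⟩ := zech_ne (b - a) hk
    refine ⟨a, b, c, hab, ?_, ?_, hL, (hchar a b c hab).mpr hc⟩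
    · intro h
      exact hzk (by linear_combination -hc - h)
    · intro h
      exact hz0 (by linear_combination -hc - h)
  have hgood : ∀ L ∈ linesList, IsLine L := by
    intro L hL
    fin_cases hL
    · exact hline 0 1 4 _ (by decide) (by decide) (by decide)
    · exact hline 0 2 8 _ (by decide) (by decide) (by decide)
    · exact hline 0 3 14 _ (by decide) (by decide) (by decide)
    · exact hline 0 5 10 _ (by decide) (by decide) (by decide)
    · exact hline 0 6 13 _ (by decide) (by decide) (by decide)
    · exact hline 0 7 9 _ (by decide) (by decide) (by decide)
    · exact hline 0 11 12 _ (by decide) (by decide) (by decide)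
    · exact hline 1 2 5 _ (by decide) (by decide) (by decide)
    · exact hline 1 3 9 _ (by decide) (by decide) (by decide)
    · exact hline 1 6 11 _ (by decide) (by decide) (by decide)
    · exact hline 1 7 14 _ (by decide) (by decide) (by decide)
    · exact hline 1 8 10 _ (by decide) (by decide) (by decide)
    · exact hline 1 12 13 _ (by decide) (by decide) (by decide)
    · exact hline 2 3 6 _ (by decide) (by decide) (by decide)
    · exact hline 2 4 10 _ (by decide) (by decide) (by decide)
    · exact hline 2 7 12 _ (by decide) (by decide) (by decide)
    · exact hline 2 9 11 _ (by decide) (by decide) (by decide)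
    · exact hline 2 13 14 _ (by decide) (by decide) (by decide)
    · exact hline 3 4 7 _ (by decide) (by decide) (by decide)
    · exact hline 3 5 11 _ (by decide) (by decide) (by decide)
    · exact hline 3 8 13 _ (by decide) (by decide) (by decide)
    · exact hline 3 10 12 _ (by decide) (by decide) (by decide)
    · exact hline 4 5 8 _ (by decide) (by decide) (by decide)
    · exact hline 4 6 12 _ (by decide) (by decide) (by decide)
    · exact hline 4 9 14 _ (by decide) (by decide) (by decide)
    · exact hline 4 11 13 _ (by decide) (by decide) (by decide)
    · exact hline 5 6 9 _ (by decide) (by decide) (by decide)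
    · exact hline 5 7 13 _ (by decide) (by decide) (by decide)
    · exact hline 5 12 14 _ (by decide) (by decide) (by decide)
    · exact hline 6 7 10 _ (by decide) (by decide) (by decide)
    · exact hline 6 8 14 _ (by decide) (by decide) (by decide)
    · exact hline 7 8 11 _ (by decide) (by decide) (by decide)
    · exact hline 8 9 12 _ (by decide) (by decide) (by decide)
    · exact hline 9 10 13 _ (by decide) (by decide) (by decide)
    · exact hline 10 11 14 _ (by decide) (by decide) (by decide)
  have hT : T = T0lit := A3
  have hP : P = P0lit := A4
  have hS : S₀ = S0Fin := AS0
  have A6' : ∀ l ∈ spreadLL, ∀ L ∈ l, L ∈ linesList := by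
    intro l hl L hL
    exact List.forall_iff_forall_mem.mp (List.forall_iff_forall_mem.mp A6 l hl) L hL
  have A2a' : ∀ l ∈ spreadLL, ∀ L₁ ∈ l, ∀ L₂ ∈ l, L₁ ≠ L₂ → L₁ ∩ L₂ = ∅ := by
    intro l hl L₁ h₁ L₂ h₂
    exact List.forall_iff_forall_mem.mp
      (List.forall_iff_forall_mem.mp (List.forall_iff_forall_mem.mp A2a l hl) L₁ h₁) L₂ h₂
  have A2b' : ∀ l ∈ spreadLL, ∀ p : ZMod 15, ∃ L ∈ l, p ∈ L :=
    fun l hl => List.forall_iff_forall_mem.mp A2b l hl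
  have A7' : ∀ L ∈ PList, (T0lit.filter fun sp => L ∈ sp).card = 3 :=
    fun L hL => List.forall_iff_forall_mem.mp A7 L hL
  have A9' : ∀ sp ∈ spreadsList, ∀ L₁ ∈ PList, ∀ L₂ ∈ PList,
      L₁ ∈ sp → L₂ ∈ sp → L₁ = L₂ := by
    intro sp hsp L₁ h₁ L₂ h₂
    exact List.forall_iff_forall_mem.mp
      (List.forall_iff_forall_mem.mp (List.forall_iff_forall_mem.mp A9 sp hsp) L₁ h₁) L₂ h₂
  have Amem' : ∀ sp ∈ spreadsList, ∃ l ∈ spreadLL, sp.val = ↑l :=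
    fun sp hsp => List.forall_iff_forall_mem.mp Amem sp hsp
  refine ⟨?_, ?_, ?_, ?_, ?_, ?_⟩
  · -- IsSpread S₀
    rw [hS]
    refine ⟨?_, ?_, ?_⟩
    · intro L hL
      exact hgood L (List.forall_iff_forall_mem.mp AS6 L
        (Multiset.mem_coe.mp (Finset.mem_mk.mp hL)))
    · intro L₁ h₁ L₂ h₂ hne
      exact Finset.disjoint_iff_inter_eq_empty.mpr
        (List.forall_iff_forall_mem.mp
          (List.forall_iff_forall_mem.mp AS2a L₁ (Multiset.mem_coe.mp (Finset.mem_mk.mp h₁)))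
          L₂ (Multiset.mem_coe.mp (Finset.mem_mk.mp h₂)) hne)
    · intro p
      obtain ⟨L, hL, hp⟩ := AS2b p
      exact ⟨L, Finset.mem_mk.mpr (Multiset.mem_coe.mpr hL), hp⟩
  · rw [hT]; exact A5
  · -- every sp in T is a spread
    rw [hT]
    intro sp hsp
    have hsp' : sp ∈ spreadsList := Multiset.mem_coe.mp (Finset.mem_mk.mp hsp)
    obtain ⟨l, hl, hval⟩ := Amem' sp hsp'
    have hmem : ∀ L, L ∈ sp ↔ L ∈ l := fun L => by
      rw [Finset.mem_def, hval, Multiset.mem_coe]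
    refine ⟨?_, ?_, ?_⟩
    · intro L hL
      exact hgood L (A6' l hl L ((hmem L).mp hL))
    · intro L₁ h₁ L₂ h₂ hne
      exact Finset.disjoint_iff_inter_eq_empty.mpr
        (A2a' l hl L₁ ((hmem L₁).mp h₁) L₂ ((hmem L₂).mp h₂) hne)
    · intro p
      obtain ⟨L, hL, hp⟩ := A2b' l hl p
      exact ⟨L, (hmem L).mpr hL, hp⟩
  · -- lines of P lie in 3 spreads
    rw [hT, hP]
    intro L hL
    exact A7' L (Multiset.mem_coe.mp (Finset.mem_mk.mp hL))
  · -- other lines lie in 2 spreads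
    intro L hLine hLP
    obtain ⟨a, b, c, hab, hbc, hac, rfl, heq⟩ := hLine
    have hc : c = a + zech (b - a) := (hchar a b c hab).mp heq
    subst hc
    rw [hP] at hLP
    rw [hT]
    exact A8 a b hab hLP
  · -- no spread contains two lines of P
    rw [hT, hP]
    intro sp hsp L₁ h₁ L₂ h₂ m₁ m₂
    exact A9' sp (Multiset.mem_coe.mp (Finset.mem_mk.mp hsp))
      L₁ (Multiset.mem_coe.mp (Finset.mem_mk.mp h₁))
      L₂ (Multiset.mem_coe.mp (Finset.mem_mk.mp h₂)) m₁ m₂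
end
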